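/- arXiv:1705.03085 — 7 statements merged into one kernel-verified Lean document; each statement's English description precedes it below -/
import Mathlib

section
/- If φ : ℝ^N → ℝ^N is a bi-Lipschitz map with bi-Lipschitz constant K (i.e. (1/K)‖x−y‖ ≤ ‖φ(x)−φ(y)‖ ≤ K‖x−y‖ for all x,y), then for every sequence t_j → ∞ of positive reals there is a subsequence (t_{n_j}) and a map dφ : ℝ^N → ℝ^N such that φ_{n_j}(v) := φ(t_{n_j} v)/t_{n_j} converges to dφ uniformly on every compact subset of ℝ^N, and dφ satisfies (1/K)‖u−v‖ ≤ ‖dφ(u)−dφ(v)‖ ≤ K‖u−v‖ for all u,v. -/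
open Set Filter Metric Topology

/-- An equi-Lipschitz sequence of maps converging pointwise converges uniformly on
every compact set. -/
lemma aux_unif {α β : Type*} [PseudoMetricSpace α] [PseudoMetricSpace β]
    (K : ℝ) (hK0 : 0 ≤ K) (G : ℕ → α → β) (g : α → β)
    (hlip : ∀ j x y, dist (G j x) (G j y) ≤ K * dist x y)
    (hpt : ∀ x, Tendsto (fun j => G j x) atTop (𝓝 (g x)))
    (C : Set α) (hC : IsCompact C) : TendstoUniformlyOn G g atTop C := by
  rw [Metric.tendstoUniformlyOn_iff]
  intro ε hε
  set δ := ε / (4 * (K + 1)) with hδdef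
  have hδ : 0 < δ := by positivity
  obtain ⟨T, hTfin, hTcover⟩ :=
    (Metric.totallyBounded_iff.mp hC.totallyBounded) δ hδ
  have hg : ∀ x y, dist (g x) (g y) ≤ K * dist x y := fun x y =>
    le_of_tendsto ((hpt x).dist (hpt y)) (Eventually.of_forall fun j => hlip j x y)
  have hev : ∀ᶠ j in atTop, ∀ y ∈ T, dist (g y) (G j y) < ε / 4 := by
    rw [eventually_all_finite hTfin]
    intro y _
    have h := (hpt y).dist (tendsto_const_nhds (x := g y))
    simp only [dist_self] at h
    have := h.eventually (eventually_lt_nhds (show (0:ℝ) < ε / 4 by positivity))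
    filter_upwards [this] with j hj
    simpa [dist_comm] using hj
  filter_upwards [hev] with j hj x hx
  obtain ⟨y, hyT, hxy⟩ : ∃ y ∈ T, x ∈ ball y δ := by
    simpa using hTcover hx
  have hxyd : dist x y < δ := mem_ball.mp hxy
  have hKδ : K * δ ≤ ε / 4 := by
    have h : K * δ = K * ε / (4 * (K + 1)) := by rw [hδdef]; ring
    rw [h, div_le_div_iff₀ (by positivity) (by norm_num)]
    nlinarith
  have h1 : dist (g x) (g y) ≤ ε / 4 :=
    le_trans (le_trans (hg x y) (by nlinarith [dist_nonneg (x := x) (y := y)])) hKδ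
  have h2 : dist (g y) (G j y) < ε / 4 := hj y hyT
  have h3 : dist (G j y) (G j x) ≤ ε / 4 := by
    have := hlip j y x
    have hd : dist y x < δ := by rwa [dist_comm]
    calc dist (G j y) (G j x) ≤ K * dist y x := this
      _ ≤ K * δ := by nlinarith [dist_nonneg (x := y) (y := x)]
      _ ≤ ε / 4 := hKδ
  calc dist (g x) (G j x)
      ≤ dist (g x) (g y) + dist (g y) (G j y) + dist (G j y) (G j x) :=
        dist_triangle4 _ _ _ _
    _ < ε / 4 + ε / 4 + ε / 4 := by linarith
    _ < ε := by linarith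

/-- Two-sided bounds for the rescaled maps. -/
lemma aux_bound {N : ℕ} {K : ℝ} (hK : 0 < K)
    {φ : EuclideanSpace ℝ (Fin N) → EuclideanSpace ℝ (Fin N)}
    (hφ : ∀ x y, (1 / K) * ‖x - y‖ ≤ ‖φ x - φ y‖ ∧ ‖φ x - φ y‖ ≤ K * ‖x - y‖)
    {s : ℝ} (hs : 0 < s) (x y : EuclideanSpace ℝ (Fin N)) :
    (1 / K) * ‖x - y‖ ≤ ‖s⁻¹ • φ (s • x) - s⁻¹ • φ (s • y)‖ ∧
      ‖s⁻¹ • φ (s • x) - s⁻¹ • φ (s • y)‖ ≤ K * ‖x - y‖ := by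
  have hnorm : ‖s⁻¹ • φ (s • x) - s⁻¹ • φ (s • y)‖ = s⁻¹ * ‖φ (s • x) - φ (s • y)‖ := by
    rw [← smul_sub, norm_smul, Real.norm_eq_abs, abs_inv, abs_of_pos hs]
  have hsub : ‖s • x - s • y‖ = s * ‖x - y‖ := by
    rw [← smul_sub, norm_smul, Real.norm_eq_abs, abs_of_pos hs]
  obtain ⟨hl, hu⟩ := hφ (s • x) (s • y)
  rw [hsub] at hl hu
  constructor
  · rw [hnorm]
    have : (1 / K) * ‖x - y‖ = s⁻¹ * ((1 / K) * (s * ‖x - y‖)) := by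
      field_simp
      try ring
    rw [this]
    exact mul_le_mul_of_nonneg_left hl (by positivity)
  · rw [hnorm]
    have : K * ‖x - y‖ = s⁻¹ * (K * (s * ‖x - y‖)) := by
      field_simp
      try ring
    rw [this]
    exact mul_le_mul_of_nonneg_left hu (by positivity)

/-- Rescalings of a bi-Lipschitz map of `ℝᴺ` along a sequence `t_j → ∞` admit a
subsequence converging, uniformly on compact sets, to a map satisfying the same
two-sided Lipschitz bounds. -/
theorem rescaling_compactness (N : ℕ) (K : ℝ) (hK : 0 < K)
    (φ : EuclideanSpace ℝ (Fin N) → EuclideanSpace ℝ (Fin N))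
    (hφ : ∀ x y, (1 / K) * ‖x - y‖ ≤ ‖φ x - φ y‖ ∧ ‖φ x - φ y‖ ≤ K * ‖x - y‖)
    (t : ℕ → ℝ) (ht : ∀ j, 0 < t j) (htop : Tendsto t atTop atTop) :
    ∃ σ : ℕ → ℕ, StrictMono σ ∧
      ∃ dφ : EuclideanSpace ℝ (Fin N) → EuclideanSpace ℝ (Fin N),
        (∀ C : Set (EuclideanSpace ℝ (Fin N)), IsCompact C →
          TendstoUniformlyOn (fun j v => (t (σ j))⁻¹ • φ (t (σ j) • v)) dφ atTop C) ∧
        ∀ u v, (1 / K) * ‖u - v‖ ≤ ‖dφ u - dφ v‖ ∧ ‖dφ u - dφ v‖ ≤ K * ‖u - v‖ := by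
  set F : ℕ → EuclideanSpace ℝ (Fin N) → EuclideanSpace ℝ (Fin N) := fun j v => (t j)⁻¹ • φ (t j • v) with hF
  have hFb : ∀ j x y, (1 / K) * ‖x - y‖ ≤ ‖F j x - F j y‖ ∧ ‖F j x - F j y‖ ≤ K * ‖x - y‖ :=
    fun j x y => by simp only [hF]; exact aux_bound hK hφ (ht j) x y
  have hlipd : ∀ j x y, dist (F j x) (F j y) ≤ K * dist x y := fun j x y => by
    rw [dist_eq_norm, dist_eq_norm]
    exact (hFb j x y).2
  -- dense sequence
  obtain ⟨e, he⟩ := TopologicalSpace.exists_dense_seq (EuclideanSpace ℝ (Fin N))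
  -- bound on F j 0
  have hF0 : ∀ j, F j 0 = (t j)⁻¹ • φ 0 := fun j => by simp [hF]
  have hc : Tendsto (fun j => ‖(t j)⁻¹ • φ (0:EuclideanSpace ℝ (Fin N))‖) atTop (𝓝 0) := by
    have h1 : Tendsto (fun j => (t j)⁻¹) atTop (𝓝 0) :=
      tendsto_inv_atTop_zero.comp htop
    have : Tendsto (fun j => (t j)⁻¹ * ‖φ (0:EuclideanSpace ℝ (Fin N))‖) atTop (𝓝 (0 * ‖φ (0:EuclideanSpace ℝ (Fin N))‖)) :=
      h1.mul_const _
    simp only [zero_mul] at this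
    refine this.congr fun j => ?_
    rw [norm_smul, Real.norm_eq_abs, abs_inv, abs_of_pos (ht j)]
  obtain ⟨M, hM⟩ : ∃ M, ∀ j, ‖(t j)⁻¹ • φ (0:EuclideanSpace ℝ (Fin N))‖ ≤ M := by
    obtain ⟨M, hM⟩ := hc.bddAbove_range
    exact ⟨M, fun j => hM ⟨j, rfl⟩⟩
  set R : ℕ → ℝ := fun n => K * ‖e n‖ + M with hR
  have hmem : ∀ j n, F j (e n) ∈ closedBall (0 : EuclideanSpace ℝ (Fin N)) (R n) := by
    intro j n
    rw [mem_closedBall, dist_zero_right]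
    calc ‖F j (e n)‖ ≤ ‖F j (e n) - F j 0‖ + ‖F j 0‖ := by
          simpa using norm_add_le (F j (e n) - F j 0) (F j 0)
      _ ≤ K * ‖e n - 0‖ + M := by
          refine add_le_add (hFb j (e n) 0).2 ?_
          rw [hF0]; exact hM j
      _ = R n := by rw [sub_zero]
  -- compactness in the product space
  set S : Set (ℕ → EuclideanSpace ℝ (Fin N)) := Set.pi univ (fun n => closedBall (0 : EuclideanSpace ℝ (Fin N)) (R n)) with hSdef
  have hScomp : IsCompact S := isCompact_univ_pi fun n => isCompact_closedBall _ _
  set y : ℕ → ℕ → EuclideanSpace ℝ (Fin N) := fun j n => F j (e n) with hy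
  have hyS : ∀ j, y j ∈ S := fun j n _ => hmem j n
  obtain ⟨L, _, σ, hσ, hconv⟩ := hScomp.tendsto_subseq hyS
  have hptd : ∀ n, Tendsto (fun j => F (σ j) (e n)) atTop (𝓝 (L n)) := by
    intro n
    exact ((continuous_apply n).tendsto L).comp hconv
  -- Cauchyness at every point
  have hcau : ∀ v : EuclideanSpace ℝ (Fin N), CauchySeq fun j => F (σ j) v := by
    intro v
    rw [Metric.cauchySeq_iff]
    intro ε hε
    set δ := ε / (4 * (K + 1)) with hδdef
    have hδ : 0 < δ := by positivity
    obtain ⟨n, hn⟩ := he.exists_dist_lt v hδ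
    have hcau' := (hptd n).cauchySeq
    rw [Metric.cauchySeq_iff] at hcau'
    obtain ⟨J, hJ⟩ := hcau' (ε / 4) (by positivity)
    refine ⟨J, fun m hm k hk => ?_⟩
    have hKδ : K * δ ≤ ε / 4 := by
      have h : K * δ = K * ε / (4 * (K + 1)) := by rw [hδdef]; ring
      rw [h, div_le_div_iff₀ (by positivity) (by norm_num)]
      nlinarith
    have hb : ∀ j, dist (F (σ j) v) (F (σ j) (e n)) ≤ ε / 4 := by
      intro j
      calc dist (F (σ j) v) (F (σ j) (e n)) ≤ K * dist v (e n) := hlipd (σ j) v (e n)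
        _ ≤ K * δ := by nlinarith [dist_nonneg (x := v) (y := e n)]
        _ ≤ ε / 4 := hKδ
    calc dist (F (σ m) v) (F (σ k) v)
        ≤ dist (F (σ m) v) (F (σ m) (e n)) + dist (F (σ m) (e n)) (F (σ k) (e n))
            + dist (F (σ k) (e n)) (F (σ k) v) := dist_triangle4 _ _ _ _
      _ < ε / 4 + ε / 4 + ε / 4 := by
          have := hJ m hm k hk
          have h3 : dist (F (σ k) (e n)) (F (σ k) v) ≤ ε / 4 := by
            rw [dist_comm]; exact hb k
          have h1 := hb m
          -- strict on the middle term
          exact add_lt_add_of_lt_of_le (add_lt_add_of_le_of_lt h1 this) h3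
      _ < ε := by linarith
  have hlim : ∀ v : EuclideanSpace ℝ (Fin N), ∃ a : EuclideanSpace ℝ (Fin N), Tendsto (fun j => F (σ j) v) atTop (𝓝 a) := fun v =>
    cauchySeq_tendsto_of_complete (hcau v)
  choose dφ hdφ using hlim
  refine ⟨σ, hσ, dφ, ?_, ?_⟩
  · intro C hC
    have := aux_unif K hK.le (fun j => F (σ j)) dφ (fun j => hlipd (σ j)) hdφ C hC
    simpa only [hF] using this
  · intro u v
    have h1 : Tendsto (fun j => ‖F (σ j) u - F (σ j) v‖) atTop (𝓝 ‖dφ u - dφ v‖) :=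
      ((hdφ u).sub (hdφ v)).norm
    exact ⟨ge_of_tendsto' h1 fun j => (hFb (σ j) u v).1,
      le_of_tendsto' h1 fun j => (hFb (σ j) u v).2⟩
end

section
/- Let φ : ℝ^N → ℝ^N be bi-Lipschitz with constant K, let t_j → ∞, and suppose dφ(v) = lim_{j→∞} φ(t_j v)/t_j and dψ(w) = lim_{j→∞} φ^{-1}(t_j w)/t_j exist for all v, w ∈ ℝ^N. Then dψ ∘ dφ = id and dφ ∘ dψ = id; in particular dφ is a bi-Lipschitz homeomorphism of ℝ^N with inverse dψ. -/
/-!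
Rescaling `f ↦ t⁻¹ • f (t • ·)` commutes with composition and preserves two-sided Lipschitz
bounds, which then pass to pointwise limits. Writing `v = t⁻¹ • ψ (t • (t⁻¹ • φ (t • v)))`,
the `K`-Lipschitz bound on `ψ` gives
`‖t⁻¹ • ψ (t • dφ v) - v‖ ≤ K ‖dφ v - t⁻¹ • φ (t • v)‖ → 0`, so `dψ (dφ v) = v`,
and symmetrically `dφ (dψ w) = w`.
-/

open Filter Function Topology

lemma norm_sub_le_of_rightInverse {E F : Type*} [SeminormedAddCommGroup E]
    [SeminormedAddCommGroup F] {f : E → F} {g : F → E} {K : ℝ} (hK : 0 < K)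
    (hf : ∀ x y, (1 / K) * ‖x - y‖ ≤ ‖f x - f y‖) (hfg : RightInverse g f) (x y : F) :
    ‖g x - g y‖ ≤ K * ‖x - y‖ := by
  have := hf (g x) (g y)
  rw [hfg x, hfg y] at this
  calc ‖g x - g y‖ = K * ((1 / K) * ‖g x - g y‖) := by field_simp
    _ ≤ K * ‖x - y‖ := by gcongr

section Rescale

variable {E F G : Type*} [SeminormedAddCommGroup E] [NormedSpace ℝ E]
  [SeminormedAddCommGroup F] [NormedSpace ℝ F] [SeminormedAddCommGroup G] [NormedSpace ℝ G]

noncomputable def rescale (t : ℝ) (f : E → F) (x : E) : F := t⁻¹ • f (t • x)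

lemma rescale_comp {t : ℝ} (ht : t ≠ 0) (g : F → G) (f : E → F) (x : E) :
    rescale t g (rescale t f x) = rescale t (g ∘ f) x := by
  simp only [rescale, smul_inv_smul₀ ht, comp_apply]

lemma rescale_id {t : ℝ} (ht : t ≠ 0) (x : E) : rescale t id x = x :=
  inv_smul_smul₀ ht x

lemma norm_rescale_sub {t : ℝ} (ht : 0 < t) (f : E → F) (u v : E) :
    ‖rescale t f u - rescale t f v‖ = t⁻¹ * ‖f (t • u) - f (t • v)‖ := by
  rw [rescale, rescale, ← smul_sub, norm_smul_of_nonneg (inv_pos.2 ht).le]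

lemma norm_smul_sub_smul {t : ℝ} (ht : 0 < t) (u v : E) :
    ‖t • u - t • v‖ = t * ‖u - v‖ := by
  rw [← smul_sub, norm_smul_of_nonneg ht.le]

variable {f : E → F} {K t : ℝ}

lemma norm_rescale_sub_le (hf : ∀ x y, ‖f x - f y‖ ≤ K * ‖x - y‖) (ht : 0 < t) (u v : E) :
    ‖rescale t f u - rescale t f v‖ ≤ K * ‖u - v‖ := by
  have := hf (t • u) (t • v)
  rw [norm_smul_sub_smul ht] at this
  calc ‖rescale t f u - rescale t f v‖
      = t⁻¹ * ‖f (t • u) - f (t • v)‖ := norm_rescale_sub ht f u v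
    _ ≤ t⁻¹ * (K * (t * ‖u - v‖)) := by gcongr
    _ = K * ‖u - v‖ := by field_simp

lemma le_norm_rescale_sub (hf : ∀ x y, K * ‖x - y‖ ≤ ‖f x - f y‖) (ht : 0 < t) (u v : E) :
    K * ‖u - v‖ ≤ ‖rescale t f u - rescale t f v‖ := by
  have := hf (t • u) (t • v)
  rw [norm_smul_sub_smul ht] at this
  calc K * ‖u - v‖ = t⁻¹ * (K * (t * ‖u - v‖)) := by field_simp
    _ ≤ t⁻¹ * ‖f (t • u) - f (t • v)‖ := by gcongr
    _ = ‖rescale t f u - rescale t f v‖ := (norm_rescale_sub ht f u v).symm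

variable {ι : Type*} {l : Filter ι} {t : ι → ℝ}

lemma tendsto_rescale_of_leftInverse {g : F → E} (hgf : LeftInverse g f)
    (hg : ∀ x y, ‖g x - g y‖ ≤ K * ‖x - y‖) (ht : ∀ j, 0 < t j) {v : E} {L : F}
    (hf : Tendsto (fun j => rescale (t j) f v) l (𝓝 L)) :
    Tendsto (fun j => rescale (t j) g L) l (𝓝 v) := by
  have hgf_id (j : ι) : rescale (t j) g (rescale (t j) f v) = v := by
    rw [rescale_comp (ht j).ne', hgf.comp_eq_id, rescale_id (ht j).ne']
  have hbound : Tendsto (fun j => K * ‖L - rescale (t j) f v‖) l (𝓝 0) := by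
    simpa using ((hf.const_sub L).norm).const_mul K
  rw [tendsto_iff_norm_sub_tendsto_zero]
  refine squeeze_zero (fun _ => norm_nonneg _) (fun j => ?_) hbound
  conv_lhs => rw [← hgf_id j]
  exact norm_rescale_sub_le hg (ht j) _ _

end Rescale

theorem rescaled_limits_are_inverse_general (N : ℕ) (K : ℝ) (hK : 0 < K)
    (φ ψ : EuclideanSpace ℝ (Fin N) → EuclideanSpace ℝ (Fin N))
    (hφ : ∀ x y, (1 / K) * ‖x - y‖ ≤ ‖φ x - φ y‖ ∧ ‖φ x - φ y‖ ≤ K * ‖x - y‖)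
    (hψl : Function.LeftInverse ψ φ) (hψr : Function.RightInverse ψ φ)
    (t : ℕ → ℝ) (ht : ∀ j, 0 < t j)
    (dφ dψ : EuclideanSpace ℝ (Fin N) → EuclideanSpace ℝ (Fin N))
    (hdφ : ∀ v, Tendsto (fun j => (t j)⁻¹ • φ (t j • v)) atTop (nhds (dφ v)))
    (hdψ : ∀ w, Tendsto (fun j => (t j)⁻¹ • ψ (t j • w)) atTop (nhds (dψ w))) :
    dψ ∘ dφ = id ∧ dφ ∘ dψ = id ∧
      ∀ u v, (1 / K) * ‖u - v‖ ≤ ‖dφ u - dφ v‖ ∧ ‖dφ u - dφ v‖ ≤ K * ‖u - v‖ := by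
  have hφ_lip : ∀ x y, ‖φ x - φ y‖ ≤ K * ‖x - y‖ := fun x y => (hφ x y).2
  have hψ_lip := norm_sub_le_of_rightInverse hK (fun x y => (hφ x y).1) hψr
  refine ⟨funext fun v => ?_, funext fun w => ?_, fun u v => ⟨?_, ?_⟩⟩
  · exact tendsto_nhds_unique (hdψ (dφ v)) (tendsto_rescale_of_leftInverse hψl hψ_lip ht (hdφ v))
  · exact tendsto_nhds_unique (hdφ (dψ w)) (tendsto_rescale_of_leftInverse hψr hφ_lip ht (hdψ w))
  · exact ge_of_tendsto' ((hdφ u).sub (hdφ v)).norm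
      fun j => le_norm_rescale_sub (fun x y => (hφ x y).1) (ht j) u v
  · exact le_of_tendsto' ((hdφ u).sub (hdφ v)).norm
      fun j => norm_rescale_sub_le hφ_lip (ht j) u v

/-- If `φ : ℝᴺ → ℝᴺ` is bi-Lipschitz with inverse `ψ`, `t_j → ∞`, and the rescalings
`φ(t_j v)/t_j` and `ψ(t_j w)/t_j` converge pointwise to `dφ` and `dψ`, then
`dψ ∘ dφ = id` and `dφ ∘ dψ = id`; in particular `dφ` is a bi-Lipschitz
homeomorphism with inverse `dψ`. -/
theorem rescaled_limits_are_inverse (N : ℕ) (K : ℝ) (hK : 0 < K)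
    (φ ψ : EuclideanSpace ℝ (Fin N) → EuclideanSpace ℝ (Fin N))
    (hφ : ∀ x y, (1 / K) * ‖x - y‖ ≤ ‖φ x - φ y‖ ∧ ‖φ x - φ y‖ ≤ K * ‖x - y‖)
    (hψl : Function.LeftInverse ψ φ) (hψr : Function.RightInverse ψ φ)
    (t : ℕ → ℝ) (ht : ∀ j, 0 < t j) (htop : Tendsto t atTop atTop)
    (dφ dψ : EuclideanSpace ℝ (Fin N) → EuclideanSpace ℝ (Fin N))
    (hdφ : ∀ v, Tendsto (fun j => (t j)⁻¹ • φ (t j • v)) atTop (nhds (dφ v)))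
    (hdψ : ∀ w, Tendsto (fun j => (t j)⁻¹ • ψ (t j • w)) atTop (nhds (dψ w))) :
    dψ ∘ dφ = id ∧ dφ ∘ dψ = id ∧
      ∀ u v, (1 / K) * ‖u - v‖ ≤ ‖dφ u - dφ v‖ ∧ ‖dφ u - dφ v‖ ≤ K * ‖u - v‖ :=
  rescaled_limits_are_inverse_general N K hK φ ψ hφ hψl hψr t ht dφ dψ hdφ hdψ
end

section
/- Let Y = ℝ^k \ B, the complement of a closed Euclidean ball B in ℝ^k with k > 1. Then for all p, q ∈ Y the inner distance satisfies d_Y(p,q) ≤ π‖p−q‖. In particular Y is Lipschitz normally embedded with constant π. -/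
/-!
Join `p` and `q` by a broken path: run radially from `p` down to the sphere about `c` of
radius `m = min ‖p - c‖ ‖q - c‖`, follow a great-circle arc of angle `θ = ∠(p - c, q - c)` on
that sphere (it exists because `k ≥ 2`, even when `θ = π`), and run radially out to `q`.
Lengths of paths are variations, which add under concatenation, so the inner distance is
bounded by the length `|‖p - c‖ - ‖q - c‖| + m θ` of this path. The law of cosines together
with `1 - cos θ ≥ 2 θ² / π²` for `|θ| ≤ π` bounds that length by `π ‖p - q‖`.
-/

open Set Filter Metric

noncomputable section

/-- The inner (length) extended distance on a subset `X`: the infimum of lengths of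
paths inside `X` joining `p` to `q`. -/
def innerEDist {E : Type*} [EMetricSpace E] (X : Set E) (p q : E) : ENNReal :=
  ⨅ (γ : Path p q) (_ : Set.range γ ⊆ X), eVariationOn (fun t => γ t) Set.univ

open Real InnerProductGeometry unitInterval
open scoped NNReal RealInnerProductSpace

section PathLength

variable {E : Type*} [EMetricSpace E]

theorem eVariationOn_comp_coe_unitInterval (f : ℝ → E) :
    eVariationOn (fun t : I => f t) univ = eVariationOn f I := by
  have h := eVariationOn.comp_eq_of_monotoneOn f ((↑) : I → ℝ) (t := univ) fun _ _ _ _ h => h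
  rwa [image_univ, Subtype.range_coe] at h

theorem Path.eVariationOn_eq_extend {x y : E} (γ : Path x y) :
    eVariationOn γ univ = eVariationOn γ.extend I := by
  rw [← eVariationOn_comp_coe_unitInterval]
  simp only [Path.extend_extends']

theorem Path.eVariationOn_trans {x y z : E} (γ₁ : Path x y) (γ₂ : Path y z) :
    eVariationOn (γ₁.trans γ₂) univ = eVariationOn γ₁ univ + eVariationOn γ₂ univ := by
  have hsplit := eVariationOn.Icc_add_Icc (γ₁.trans γ₂).extend (s := univ)
    (by norm_num : (0 : ℝ) ≤ 1 / 2) (by norm_num : (1 / 2 : ℝ) ≤ 1) (mem_univ _)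
  simp only [univ_inter] at hsplit
  rw [Path.eVariationOn_eq_extend, Path.eVariationOn_eq_extend, Path.eVariationOn_eq_extend,
    ← hsplit]
  congr 1
  · rw [eVariationOn.eq_of_eqOn fun t ht => Path.extend_trans_of_le_half γ₁ γ₂ ht.2,
      ← Function.comp_def, eVariationOn.comp_eq_of_monotoneOn _ _
        (fun _ _ _ _ h => by linarith), image_mul_left_Icc (by norm_num) (by norm_num)]
    norm_num
  · rw [eVariationOn.eq_of_eqOn fun t ht => Path.extend_trans_of_half_le γ₁ γ₂ ht.1,
      ← Function.comp_def, eVariationOn.comp_eq_of_monotoneOn _ _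
        (fun _ _ _ _ h => by linarith)]
    simp_rw [sub_eq_add_neg, image_affine_Icc' (two_pos : (0 : ℝ) < 2)]
    norm_num

theorem innerEDist_mono {X Y : Set E} (h : X ⊆ Y) (x y : E) :
    innerEDist Y x y ≤ innerEDist X x y :=
  iInf_mono fun _ => iInf_mono' fun hγ => ⟨hγ.trans h, le_rfl⟩

theorem innerEDist_triangle (X : Set E) (x y z : E) :
    innerEDist X x z ≤ innerEDist X x y + innerEDist X y z := by
  simp only [innerEDist, ENNReal.iInf_add, ENNReal.add_iInf]
  refine le_iInf₂ fun γ₂ h₂ => le_iInf₂ fun γ₁ h₁ => ?_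
  refine iInf₂_le_of_le (γ₁.trans γ₂) ?_ (Path.eVariationOn_trans γ₁ γ₂).le
  rw [Path.trans_range]
  exact union_subset h₁ h₂

theorem innerEDist_le_eVariationOn {X : Set E} {f : ℝ → E} {a b : ℝ} (hab : a ≤ b)
    (hf : ContinuousOn f (Icc a b)) (hX : MapsTo f (Icc a b) X) :
    innerEDist X (f a) (f b) ≤ eVariationOn f (Icc a b) := by
  have himage : AffineMap.lineMap a b '' I = Icc a b := by
    rw [← segment_eq_image_lineMap, segment_eq_Icc hab]
  have hline : ContinuousOn (f ∘ AffineMap.lineMap a b) I :=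
    hf.comp (AffineMap.lineMap_continuous.continuousOn) (himage ▸ mapsTo_image _ _)
  let γ : Path (f a) (f b) := Path.ofLine hline (by simp) (by simp)
  have hγ : range γ ⊆ X := by
    rintro _ ⟨t, rfl⟩
    exact hX (himage ▸ mem_image_of_mem _ t.2)
  refine iInf₂_le_of_le γ hγ (le_of_eq ?_)
  change eVariationOn (fun t : I => (f ∘ AffineMap.lineMap a b) (t : ℝ)) univ = _
  rw [eVariationOn_comp_coe_unitInterval, eVariationOn.comp_eq_of_monotoneOn _ _
    ((AffineMap.lineMap_mono hab).monotoneOn _), himage]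

theorem innerEDist_le_of_lipschitzOnWith {X : Set E} {f : ℝ → E} {K : ℝ≥0} {a b : ℝ}
    (hab : a ≤ b) (hf : LipschitzOnWith K f (Icc a b)) (hX : MapsTo f (Icc a b) X) :
    innerEDist X (f a) (f b) ≤ K * ENNReal.ofReal (b - a) := by
  refine (innerEDist_le_eVariationOn hab hf.continuousOn hX).trans ?_
  simpa using hf.comp_eVariationOn_le (mapsTo_id _)

end PathLength

section NormedSpace

variable {V : Type*} [NormedAddCommGroup V] [NormedSpace ℝ V]

theorem innerEDist_le_edist_of_segment_subset {X : Set V} {x y : V} (h : segment ℝ x y ⊆ X) :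
    innerEDist X x y ≤ edist x y := by
  have hX : MapsTo (AffineMap.lineMap x y) (Icc (0 : ℝ) 1) X := by
    rw [segment_eq_image_lineMap] at h
    exact (mapsTo_image _ _).mono_right h
  have hlen := innerEDist_le_of_lipschitzOnWith zero_le_one
    (lipschitzWith_lineMap x y).lipschitzOnWith hX
  simp only [AffineMap.lineMap_apply_zero, AffineMap.lineMap_apply_one, sub_zero,
    ENNReal.ofReal_one, mul_one] at hlen
  rwa [edist_nndist]

theorem innerEDist_compl_closedBall_ray_le {c u : V} (hu : ‖u‖ = 1) {r a b : ℝ} (ha : r < a)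
    (hb : r < b) :
    innerEDist (closedBall c r)ᶜ (c + a • u) (c + b • u) ≤ ENNReal.ofReal |a - b| := by
  have hray : ∀ s : ℝ, dist (c + s • u) c = |s| := fun s => by
    rw [dist_eq_norm, add_sub_cancel_left, norm_smul, hu, mul_one, norm_eq_abs]
  have hseg : segment ℝ (c + a • u) (c + b • u) ⊆ (closedBall c r)ᶜ := by
    rintro _ ⟨s, t, hs, ht, hst, rfl⟩
    have hcomb : s • (c + a • u) + t • (c + b • u) = c + (s * a + t * b) • u := by
      linear_combination (norm := module) hst • c
    rw [hcomb, mem_compl_iff, mem_closedBall, not_le, hray]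
    calc r < min a b := lt_min ha hb
      _ = s * min a b + t * min a b := by rw [← add_mul, hst, one_mul]
      _ ≤ s * a + t * b := by gcongr <;> simp
      _ ≤ |s * a + t * b| := le_abs_self _
  refine (innerEDist_le_edist_of_segment_subset hseg).trans_eq ?_
  rw [edist_dist, dist_eq_norm, add_sub_add_left_eq_sub, ← sub_smul, norm_smul, hu, mul_one,
    norm_eq_abs]

end NormedSpace

theorem sq_cos_sub_cos_add_sq_sin_sub_sin_le (s t : ℝ) :
    (cos s - cos t) ^ 2 + (sin s - sin t) ^ 2 ≤ (s - t) ^ 2 := by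
  have h := one_sub_sq_div_two_le_cos (x := s - t)
  rw [cos_sub] at h
  nlinarith [sin_sq_add_cos_sq s, sin_sq_add_cos_sq t]

section InnerProductSpace

variable {F : Type*} [NormedAddCommGroup F] [InnerProductSpace ℝ F]

theorem norm_smul_add_smul_sq {u e : F} (hu : ‖u‖ = 1) (he : ‖e‖ = 1) (hue : ⟪u, e⟫ = 0)
    (a b : ℝ) : ‖a • u + b • e‖ ^ 2 = a ^ 2 + b ^ 2 := by
  rw [norm_add_sq_real, real_inner_smul_left, real_inner_smul_right, hue, norm_smul, norm_smul,
    hu, he, norm_eq_abs, norm_eq_abs]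
  simp [sq_abs]

theorem lipschitzWith_circle {u e : F} (hu : ‖u‖ = 1) (he : ‖e‖ = 1) (hue : ⟪u, e⟫ = 0)
    (c : F) {m : ℝ} (hm : 0 ≤ m) :
    LipschitzWith m.toNNReal fun t : ℝ => c + m • (cos t • u + sin t • e) := by
  refine LipschitzWith.of_dist_le_mul fun s t => ?_
  have hchord : ‖(cos s - cos t) • u + (sin s - sin t) • e‖ ≤ |s - t| := by
    rw [← pow_le_pow_iff_left₀ (norm_nonneg _) (abs_nonneg _) two_ne_zero,
      norm_smul_add_smul_sq hu he hue, sq_abs]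
    exact sq_cos_sub_cos_add_sq_sin_sub_sin_le s t
  have hdiff : c + m • (cos s • u + sin s • e) - (c + m • (cos t • u + sin t • e)) =
      m • ((cos s - cos t) • u + (sin s - sin t) • e) := by
    module
  rw [dist_eq_norm, hdiff, norm_smul, norm_of_nonneg hm, Real.coe_toNNReal _ hm, dist_eq_norm,
    norm_eq_abs]
  exact mul_le_mul_of_nonneg_left hchord hm

theorem exists_norm_eq_one_inner_eq_zero (hF : 1 < Module.finrank ℝ F) (u : F) :
    ∃ e : F, ‖e‖ = 1 ∧ ⟪u, e⟫ = 0 := by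
  have hne : (ℝ ∙ u)ᗮ ≠ ⊥ := by
    intro hbot
    rw [Submodule.orthogonal_eq_bot_iff] at hbot
    have h := finrank_span_le_card (R := ℝ) ({u} : Set F)
    rw [hbot, finrank_top] at h
    simp only [Set.toFinset_singleton, Finset.card_singleton] at h
    omega
  obtain ⟨w, hw, hw0⟩ := Submodule.exists_mem_ne_zero_of_ne_bot hne
  refine ⟨‖w‖⁻¹ • w, norm_smul_inv_norm hw0, ?_⟩
  rw [real_inner_smul_right, Submodule.mem_orthogonal_singleton_iff_inner_right.1 hw, mul_zero]

theorem exists_eq_cos_angle_smul_add_sin_angle_smul (hF : 1 < Module.finrank ℝ F) {u v : F}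
    (hu : ‖u‖ = 1) (hv : ‖v‖ = 1) :
    ∃ e : F, ‖e‖ = 1 ∧ ⟪u, e⟫ = 0 ∧ v = cos (angle u v) • u + sin (angle u v) • e := by
  have hcos : cos (angle u v) = ⟪u, v⟫ := by rw [cos_angle, hu, hv, mul_one, div_one]
  set z := v - ⟪u, v⟫ • u with hz
  have huz : ⟪u, z⟫ = 0 := by
    rw [hz, inner_sub_right, real_inner_smul_right, real_inner_self_eq_norm_sq, hu]
    ring
  have hnorm : ‖z‖ = sin (angle u v) := by
    rw [← sq_eq_sq₀ (norm_nonneg z) (sin_angle_nonneg u v), sin_sq, hcos, hz,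
      norm_sub_sq_real, real_inner_smul_right, norm_smul, hu, hv, norm_eq_abs, mul_one, sq_abs,
      real_inner_comm u v]
    ring
  rw [hcos]
  rcases eq_or_ne z 0 with hz0 | hz0
  · obtain ⟨e, he, hue⟩ := exists_norm_eq_one_inner_eq_zero hF u
    refine ⟨e, he, hue, ?_⟩
    rw [← hnorm, hz0, norm_zero, zero_smul, add_zero, ← sub_eq_zero, ← hz, hz0]
  · refine ⟨‖z‖⁻¹ • z, norm_smul_inv_norm hz0, by rw [real_inner_smul_right, huz, mul_zero], ?_⟩
    rw [← hnorm, smul_inv_smul₀ (norm_ne_zero_iff.2 hz0), hz, add_sub_cancel]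

theorem abs_norm_sub_norm_add_min_mul_angle_le (x y : F) :
    |‖x‖ - ‖y‖| + min ‖x‖ ‖y‖ * angle x y ≤ π * ‖x - y‖ := by
  set θ := angle x y
  set m := min ‖x‖ ‖y‖
  have hcos : cos θ ≤ 1 - 2 / π ^ 2 * θ ^ 2 :=
    cos_le_one_sub_mul_cos_sq
      (abs_le.2 ⟨by linarith [angle_nonneg x y, pi_pos], angle_le_pi x y⟩)
  have hlaw := norm_sub_sq_eq_norm_sq_add_norm_sq_sub_two_mul_norm_mul_norm_mul_cos_angle x y
  have hm : m ^ 2 ≤ ‖x‖ * ‖y‖ := by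
    rw [sq]
    exact mul_le_mul (min_le_left _ _) (min_le_right _ _) (by positivity) (norm_nonneg _)
  have hangle : 2 * θ ^ 2 ≤ π ^ 2 * (1 - cos θ) := by
    have := mul_le_mul_of_nonneg_left hcos (sq_nonneg π)
    field_simp at this
    linarith
  have hdist : π ^ 2 * (‖x‖ - ‖y‖) ^ 2 + 4 * (‖x‖ * ‖y‖) * θ ^ 2 ≤ (π * ‖x - y‖) ^ 2 := by
    rw [mul_pow, sq ‖x - y‖, hlaw]
    nlinarith [mul_le_mul_of_nonneg_left hangle (by positivity : 0 ≤ 2 * (‖x‖ * ‖y‖))]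
  have hπ : 2 < π ^ 2 := by nlinarith [pi_gt_three]
  have key : (|‖x‖ - ‖y‖| + m * θ) ^ 2 ≤ (π * ‖x - y‖) ^ 2 := by
    nlinarith [sq_nonneg (|‖x‖ - ‖y‖| - m * θ), sq_abs (‖x‖ - ‖y‖),
      mul_le_mul_of_nonneg_right hm (sq_nonneg θ), sq_nonneg (‖x‖ - ‖y‖)]
  exact abs_le_of_sq_le_sq' key (by positivity) |>.2

theorem innerEDist_sphere_cos_sin_le {u e : F} (hu : ‖u‖ = 1) (he : ‖e‖ = 1) (hue : ⟪u, e⟫ = 0)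
    (c : F) {m θ : ℝ} (hm : 0 ≤ m) (hθ : 0 ≤ θ) :
    innerEDist (sphere c m) (c + m • u) (c + m • (cos θ • u + sin θ • e)) ≤
      ENNReal.ofReal (m * θ) := by
  have hX : MapsTo (fun t : ℝ => c + m • (cos t • u + sin t • e)) (Icc 0 θ) (sphere c m) :=
    fun t _ => by
      have hunit : ‖cos t • u + sin t • e‖ = 1 := (sq_eq_sq₀ (norm_nonneg _) zero_le_one).1 (by
        rw [norm_smul_add_smul_sq hu he hue, one_pow, cos_sq_add_sin_sq])
      rw [mem_sphere, dist_eq_norm, add_sub_cancel_left, norm_smul, norm_of_nonneg hm, hunit,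
        mul_one]
  have hlen := innerEDist_le_of_lipschitzOnWith hθ
    (lipschitzWith_circle hu he hue c hm).lipschitzOnWith hX
  simp only [cos_zero, sin_zero, one_smul, zero_smul, add_zero, sub_zero] at hlen
  rwa [ENNReal.ofReal_mul hm]

theorem innerEDist_sphere_le_mul_angle (hF : 1 < Module.finrank ℝ F) (c : F) {m : ℝ}
    (hm : 0 ≤ m) {u v : F} (hu : ‖u‖ = 1) (hv : ‖v‖ = 1) :
    innerEDist (sphere c m) (c + m • u) (c + m • v) ≤ ENNReal.ofReal (m * angle u v) := by
  obtain ⟨e, he, hue, hve⟩ := exists_eq_cos_angle_smul_add_sin_angle_smul hF hu hv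
  conv_lhs => rw [hve]
  exact innerEDist_sphere_cos_sin_le hu he hue c hm (angle_nonneg u v)

theorem innerEDist_compl_closedBall_le_abs_add_min_mul_angle (hF : 1 < Module.finrank ℝ F)
    {c u v : F} (hu : ‖u‖ = 1) (hv : ‖v‖ = 1) {r a b : ℝ} (hr : 0 ≤ r) (ha : r < a) (hb : r < b) :
    innerEDist (closedBall c r)ᶜ (c + a • u) (c + b • v) ≤
      ENNReal.ofReal (|a - b| + min a b * angle u v) := by
  set m := min a b
  have hm : r < m := lt_min ha hb
  have hmθ : 0 ≤ m * angle u v := mul_nonneg (hr.trans hm.le) (angle_nonneg u v)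
  have hsphere : sphere c m ⊆ (closedBall c r)ᶜ := fun x hx => by
    rw [mem_compl_iff, mem_closedBall, not_le, mem_sphere.1 hx]
    exact hm
  have hradial : |a - m| + |m - b| = |a - b| := by
    rcases le_total a b with h | h <;> simp [m, h, abs_of_nonneg, abs_of_nonpos]
  calc innerEDist (closedBall c r)ᶜ (c + a • u) (c + b • v)
      ≤ innerEDist (closedBall c r)ᶜ (c + a • u) (c + m • u) +
          innerEDist (closedBall c r)ᶜ (c + m • u) (c + m • v) +
          innerEDist (closedBall c r)ᶜ (c + m • v) (c + b • v) :=
        (innerEDist_triangle _ _ _ _).trans (add_le_add_left (innerEDist_triangle _ _ _ _) _)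
    _ ≤ ENNReal.ofReal |a - m| + ENNReal.ofReal (m * angle u v) + ENNReal.ofReal |m - b| := by
        gcongr
        · exact innerEDist_compl_closedBall_ray_le hu ha hm
        · exact (innerEDist_mono hsphere _ _).trans
            (innerEDist_sphere_le_mul_angle hF c (hr.trans hm.le) hu hv)
        · exact innerEDist_compl_closedBall_ray_le hv hm hb
    _ = ENNReal.ofReal (|a - b| + m * angle u v) := by
        rw [← ENNReal.ofReal_add (abs_nonneg _) hmθ,
          ← ENNReal.ofReal_add (add_nonneg (abs_nonneg _) hmθ) (abs_nonneg _)]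
        congr 1
        linarith

theorem innerEDist_compl_closedBall_le_pi_mul_norm (hF : 1 < Module.finrank ℝ F)
    {c p q : F} {r : ℝ} (hp : p ∈ (closedBall c r)ᶜ) (hq : q ∈ (closedBall c r)ᶜ) :
    innerEDist (closedBall c r)ᶜ p q ≤ ENNReal.ofReal (π * ‖p - q‖) := by
  rcases lt_or_ge r 0 with hr | hr
  · rw [closedBall_eq_empty.2 hr, compl_empty]
    refine (innerEDist_le_edist_of_segment_subset (subset_univ _)).trans ?_
    rw [edist_dist, dist_eq_norm]
    exact ENNReal.ofReal_le_ofReal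
      (le_mul_of_one_le_left (norm_nonneg _) (by linarith [pi_gt_three]))
  have hpr : r < ‖p - c‖ := by simpa [dist_eq_norm] using hp
  have hqr : r < ‖q - c‖ := by simpa [dist_eq_norm] using hq
  have hunit : ∀ x : F, x ≠ 0 → ‖‖x‖⁻¹ • x‖ = 1 := fun x hx => by
    rw [norm_smul, norm_inv, norm_norm, inv_mul_cancel₀ (norm_ne_zero_iff.2 hx)]
  have hpc : 0 < ‖p - c‖ := hr.trans_lt hpr
  have hqc : 0 < ‖q - c‖ := hr.trans_lt hqr
  have hpath := innerEDist_compl_closedBall_le_abs_add_min_mul_angle hF (c := c)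
    (hunit _ (norm_pos_iff.1 hpc)) (hunit _ (norm_pos_iff.1 hqc)) hr hpr hqr
  rw [smul_inv_smul₀ hpc.ne', smul_inv_smul₀ hqc.ne', add_sub_cancel, add_sub_cancel,
    angle_smul_left_of_pos _ _ (inv_pos.2 hpc), angle_smul_right_of_pos _ _ (inv_pos.2 hqc)]
    at hpath
  refine hpath.trans (ENNReal.ofReal_le_ofReal ?_)
  simpa using abs_norm_sub_norm_add_min_mul_angle_le (p - c) (q - c)

end InnerProductSpace

/-- The complement of a closed Euclidean ball in `ℝᵏ`, `k > 1`, is Lipschitz normally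
embedded with constant `π`: the inner distance between any two points of the
complement is at most `π` times their Euclidean distance. -/
theorem ball_complement_LNE (k : ℕ) (hk : 1 < k) (c : EuclideanSpace ℝ (Fin k)) (r : ℝ) :
    ∀ p ∈ (Set.univ \ Metric.closedBall c r), ∀ q ∈ (Set.univ \ Metric.closedBall c r),
      innerEDist (Set.univ \ Metric.closedBall c r) p q ≤
        ENNReal.ofReal (Real.pi * ‖p - q‖) := by
  simp only [← compl_eq_univ_sdiff]
  exact fun p hp q hq => innerEDist_compl_closedBall_le_pi_mul_norm
    (by rwa [finrank_euclideanSpace_fin]) hp hq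

end
end

section
/- If a closed unbounded subset X ⊆ ℝ^n is bi-Lipschitz homeomorphic at infinity to ℝ^k for some k > 1, then there is a compact set K ⊆ ℝ^n such that X \ K is Lipschitz normally embedded. -/
/-!
Choose `r` with `K₁ ⊆ closedBall 0 r` and put `K = K₂ ∪ closure ψ(closedBall 0 r \ K₁)`.
Since `ψ` expands distances by at least `l₁`, `X \ K` is exactly the image of the exterior of
the ball. Two exterior points `a, b` are joined outside the ball by the polygon
`a → a + d w → b + d w → b`, where `d = ‖a - b‖` and `w` is a unit vector with
`⟪a, w⟫, ⟪b, w⟫ ≥ 0` (one orthogonal to `a` exists because `k ≥ 2`). On the middle leg,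
`‖c + d w‖² ≥ ‖c‖² + d² ≥ min(‖a‖, ‖b‖)² - d²/4 + d²` for `c ∈ [a, b]`, so the polygon never
gets closer to the origin than its endpoints. Its image under `ψ` is a path in `X \ K` of
length `O(l₂ d) = O(l₂ / l₁ · ‖ψ a - ψ b‖)`.
-/

open Set Filter Metric

noncomputable section

open scoped NNReal ENNReal RealInnerProductSpace
open Module

theorem innerEDist_le_of_lipschitzOnWith_s5 {E : Type*} [EMetricSpace E] {X : Set E} {g : ℝ → E}
    {L : ℝ≥0} (hg : LipschitzOnWith L g (Icc 0 1)) (hX : MapsTo g (Icc 0 1) X) :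
    innerEDist X (g 0) (g 1) ≤ L := by
  let γ : Path (g 0) (g 1) :=
    { toFun t := g t
      continuous_toFun := hg.continuousOn.comp_continuous continuous_subtype_val Subtype.prop
      source' := rfl
      target' := rfl }
  have hvar : eVariationOn (Subtype.val : unitInterval → ℝ) univ ≤ 1 := by
    have h := ((Subtype.mono_coe _).monotoneOn univ).eVariationOn_eq
      (mem_univ (0 : unitInterval)) (mem_univ 1)
    have hI : univ ∩ Icc (0 : unitInterval) 1 = univ := by
      ext t; simp [t.2.2, ← Subtype.coe_le_coe]
    rw [hI] at h
    simp [h]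
  calc innerEDist X (g 0) (g 1) ≤ eVariationOn (g ∘ Subtype.val : unitInterval → E) univ :=
        iInf₂_le γ (range_subset_iff.2 fun t => hX t.2)
    _ ≤ L * eVariationOn (Subtype.val : unitInterval → ℝ) univ :=
        hg.comp_eVariationOn_le fun t _ => t.2
    _ ≤ L := by grw [hvar, mul_one]

theorem LipschitzOnWith.isBounded_image {α β : Type*} [PseudoMetricSpace α] [PseudoMetricSpace β]
    {f : α → β} {K : ℝ≥0} {s t : Set α} (hf : LipschitzOnWith K f t) (hs : Bornology.IsBounded s)
    (hst : s ⊆ t) : Bornology.IsBounded (f '' s) :=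
  isBounded_image_iff.2 ⟨K * diam s, fun _ hx _ hy =>
    (hf.dist_le_mul _ (hst hx) _ (hst hy)).trans (by gcongr; exact dist_le_diam_of_mem hs hx hy)⟩

theorem mem_closure_of_map_mem_closure {α β : Type*} [PseudoMetricSpace α]
    [PseudoMetricSpace β] {f : α → β} {D s : Set α} {l : ℝ} (hl : 0 < l)
    (hf : ∀ x ∈ D, ∀ y ∈ D, l * dist x y ≤ dist (f x) (f y)) (hs : s ⊆ D) {x : α} (hx : x ∈ D)
    (h : f x ∈ closure (f '' s)) : x ∈ closure s := by
  refine Metric.mem_closure_iff.2 fun ε hε => ?_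
  obtain ⟨_, ⟨y, hy, rfl⟩, hxy⟩ := Metric.mem_closure_iff.1 h (l * ε) (mul_pos hl hε)
  exact ⟨y, hy, lt_of_mul_lt_mul_left ((hf x hx y (hs hy)).trans_lt hxy) hl.le⟩

theorem image_compl_closedBall_eq_diff {α β : Type*} [PseudoMetricSpace α]
    [PseudoMetricSpace β] {ψ : α → β} {K₁ : Set α} {X K₂ : Set β} {x₀ : α} {r l : ℝ}
    (hK₁ : K₁ ⊆ closedBall x₀ r) (hψ : BijOn ψ K₁ᶜ (X \ K₂)) (hl : 0 < l)
    (hlow : ∀ p ∈ K₁ᶜ, ∀ q ∈ K₁ᶜ, l * dist p q ≤ dist (ψ p) (ψ q)) :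
    ψ '' (closedBall x₀ r)ᶜ = X \ (K₂ ∪ closure (ψ '' (closedBall x₀ r \ K₁))) := by
  have hout : (closedBall x₀ r)ᶜ ⊆ K₁ᶜ := compl_subset_compl.2 hK₁
  ext p
  constructor
  · rintro ⟨c, hc, rfl⟩
    refine ⟨(hψ.mapsTo (hout hc)).1, ?_⟩
    rintro (h | h)
    · exact (hψ.mapsTo (hout hc)).2 h
    · exact hc <| closure_minimal sdiff_subset isClosed_closedBall <|
        mem_closure_of_map_mem_closure hl hlow (fun _ h => h.2) (hout hc) h
  · rintro ⟨hpX, hpK⟩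
    obtain ⟨c, hc, rfl⟩ := hψ.surjOn (show p ∈ X \ K₂ from ⟨hpX, fun h => hpK (.inl h)⟩)
    exact ⟨c, fun hcr => hpK (.inr (subset_closure ⟨c, ⟨hcr, hc⟩, rfl⟩)), rfl⟩

def unitClamp (x : ℝ) : ℝ := max 0 (min 1 x)

theorem lipschitzWith_unitClamp : LipschitzWith 1 unitClamp :=
  (LipschitzWith.id.const_min 1).const_max 0

theorem unitClamp_mem_Icc (x : ℝ) : unitClamp x ∈ Icc 0 1 :=
  ⟨le_max_left _ _, max_le zero_le_one (min_le_left _ _)⟩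

theorem monotone_unitClamp : Monotone unitClamp := fun _ _ h =>
  max_le_max le_rfl (min_le_min le_rfl h)

theorem lipschitzWith_unitClamp_three_mul_sub (c : ℝ) :
    LipschitzWith 3 fun t => unitClamp (3 * t - c) := by
  refine LipschitzWith.of_dist_le_mul fun s t => (lipschitzWith_unitClamp.dist_le_mul _ _).trans ?_
  rw [Real.dist_eq, Real.dist_eq, show 3 * s - c - (3 * t - c) = 3 * (s - t) by ring, abs_mul]
  norm_num

theorem unitClamp_sub_one_mul_one_sub_le_sq (u : ℝ) :
    unitClamp (u - 1) * (1 - unitClamp (u - 1)) ≤ (unitClamp u - unitClamp (u - 2)) ^ 2 := by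
  simp only [unitClamp, max_def, min_def]
  split_ifs <;> nlinarith

theorem LipschitzWith.smul_const {α E : Type*} [PseudoMetricSpace α] [SeminormedAddCommGroup E]
    [NormedSpace ℝ E] {f : α → ℝ} {K : ℝ≥0} (hf : LipschitzWith K f) (v : E) :
    LipschitzWith (K * ‖v‖₊) fun x => f x • v := by
  refine LipschitzWith.of_dist_le_mul fun x y => ?_
  rw [dist_eq_norm, ← sub_smul, norm_smul, ← dist_eq_norm, NNReal.coe_mul, coe_nnnorm,
    mul_right_comm]
  exact mul_le_mul_of_nonneg_right (hf.dist_le_mul x y) (norm_nonneg v)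

section InnerProductSpace

variable {E : Type*} [NormedAddCommGroup E] [InnerProductSpace ℝ E]

theorem exists_norm_eq_one_inner_eq_zero_s5 (hE : 1 < finrank ℝ E) (a : E) :
    ∃ w : E, ‖w‖ = 1 ∧ ⟪a, w⟫ = 0 := by
  have : FiniteDimensional ℝ E := Module.finite_of_finrank_pos (by omega)
  have : Nontrivial (ℝ ∙ a)ᗮ := by
    apply nontrivial_of_finrank_pos (R := ℝ)
    have h₁ := (ℝ ∙ a).finrank_add_finrank_orthogonal
    have h₂ : finrank ℝ (ℝ ∙ a) ≤ 1 := by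
      simpa using finrank_span_le_card ({a} : Set E)
    omega
  obtain ⟨v, hv⟩ := exists_ne (0 : (ℝ ∙ a)ᗮ)
  refine ⟨‖(v : E)‖⁻¹ • (v : E), norm_smul_inv_norm (by simpa using hv), ?_⟩
  rw [inner_smul_right, Submodule.mem_orthogonal_singleton_iff_inner_right.1 v.2, mul_zero]

theorem exists_norm_eq_one_inner_nonneg (hE : 1 < finrank ℝ E) (a b : E) :
    ∃ w : E, ‖w‖ = 1 ∧ 0 ≤ ⟪a, w⟫ ∧ 0 ≤ ⟪b, w⟫ := by
  obtain ⟨w, hw, haw⟩ := exists_norm_eq_one_inner_eq_zero_s5 hE a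
  rcases le_total 0 ⟪b, w⟫ with hbw | hbw
  · exact ⟨w, hw, haw.ge, hbw⟩
  · exact ⟨-w, by rwa [norm_neg], by simp [haw], by simpa [inner_neg_right] using hbw⟩

theorem norm_sq_add_norm_sq_le_of_inner_nonneg {x y : E} (h : 0 ≤ ⟪x, y⟫) :
    ‖x‖ ^ 2 + ‖y‖ ^ 2 ≤ ‖x + y‖ ^ 2 := by
  rw [norm_add_sq_real]; linarith

theorem norm_add_smul_sub_sq (a b : E) (t : ℝ) :
    ‖a + t • (b - a)‖ ^ 2 = (1 - t) * ‖a‖ ^ 2 + t * ‖b‖ ^ 2 - t * (1 - t) * ‖a - b‖ ^ 2 := by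
  rw [norm_add_sq_real, norm_smul, mul_pow, Real.norm_eq_abs, sq_abs, inner_smul_right,
    inner_sub_right, norm_sub_rev, norm_sub_sq_real, real_inner_self_eq_norm_sq, real_inner_comm]
  ring

theorem exists_lipschitzWith_path_min_norm_le (hE : 1 < finrank ℝ E) (a b : E) :
    ∃ g : ℝ → E, LipschitzWith (9 * ‖a - b‖₊) g ∧ g 0 = a ∧ g 1 = b ∧
      ∀ t, min ‖a‖ ‖b‖ ≤ ‖g t‖ := by
  obtain ⟨w, hw, haw, hbw⟩ := exists_norm_eq_one_inner_nonneg hE a b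
  set d := ‖a - b‖
  set v : E := d • w
  -- The middle leg runs along `[a, b]` only while the path is at full height `d` above it.
  set g : ℝ → E := fun t => a + unitClamp (3 * t - 1) • (b - a) + unitClamp (3 * t) • v
    - unitClamp (3 * t - 2) • v
  refine ⟨g, ?_, by simp [g, unitClamp], by norm_num [g, unitClamp], fun t => ?_⟩
  · have hv : ‖v‖ = d := by rw [norm_smul, hw, mul_one, norm_norm]
    have h := (((LipschitzWith.const a).add
      ((lipschitzWith_unitClamp_three_mul_sub 1).smul_const (b - a))).add
      ((lipschitzWith_unitClamp_three_mul_sub 0).smul_const v)).sub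
      ((lipschitzWith_unitClamp_three_mul_sub 2).smul_const v)
    simp only [sub_zero] at h
    refine h.weaken (le_of_eq ?_)
    rw [← NNReal.coe_inj]
    push_cast
    rw [hv, norm_sub_rev b a]
    ring
  set τ := unitClamp (3 * t - 1)
  set σ := unitClamp (3 * t) - unitClamp (3 * t - 2)
  have hσ : 0 ≤ σ := sub_nonneg.2 (monotone_unitClamp (by linarith))
  have hτ := unitClamp_mem_Icc (3 * t - 1)
  have hg : g t = (a + τ • (b - a)) + (σ * d) • w := by
    simp only [g, σ, v, smul_smul, sub_mul, sub_smul]; abel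
  have hinner : 0 ≤ ⟪a + τ • (b - a), (σ * d) • w⟫ := by
    rw [inner_smul_right, inner_add_left, real_inner_smul_left, inner_sub_left]
    exact mul_nonneg (mul_nonneg hσ (norm_nonneg _)) (by nlinarith [hτ.1, hτ.2])
  have hpath := norm_sq_add_norm_sq_le_of_inner_nonneg hinner
  rw [← hg, norm_add_smul_sub_sq, norm_smul, hw] at hpath
  have hclamp := unitClamp_sub_one_mul_one_sub_le_sq (3 * t)
  set m := min ‖a‖ ‖b‖
  have hm : 0 ≤ m := le_min (norm_nonneg a) (norm_nonneg b)
  have hma : m ^ 2 ≤ ‖a‖ ^ 2 := pow_le_pow_left₀ hm (min_le_left _ _) 2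
  have hmb : m ^ 2 ≤ ‖b‖ ^ 2 := pow_le_pow_left₀ hm (min_le_right _ _) 2
  rw [← sq_le_sq₀ hm (norm_nonneg _)]
  rw [Real.norm_eq_abs, mul_one, sq_abs] at hpath
  nlinarith [mul_le_mul_of_nonneg_left hma (sub_nonneg.2 hτ.2),
    mul_le_mul_of_nonneg_left hmb hτ.1, mul_le_mul_of_nonneg_right hclamp (sq_nonneg d)]

end InnerProductSpace

theorem LNE_of_lipschitz_regular_at_infinity_general (n k : ℕ) (hk : 1 < k)
    (X : Set (EuclideanSpace ℝ (Fin n)))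
    (K₁ : Set (EuclideanSpace ℝ (Fin k))) (hK₁ : IsCompact K₁)
    (K₂ : Set (EuclideanSpace ℝ (Fin n))) (hK₂ : IsCompact K₂)
    (ψ : EuclideanSpace ℝ (Fin k) → EuclideanSpace ℝ (Fin n))
    (hbij : Set.BijOn ψ (Set.univ \ K₁) (X \ K₂))
    (l₁ l₂ : ℝ) (hl₁ : 0 < l₁)
    (hbil : ∀ p ∈ Set.univ \ K₁, ∀ q ∈ Set.univ \ K₁,
      l₁ * ‖p - q‖ ≤ ‖ψ p - ψ q‖ ∧ ‖ψ p - ψ q‖ ≤ l₂ * ‖p - q‖) :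
    ∃ K : Set (EuclideanSpace ℝ (Fin n)), IsCompact K ∧
      ∃ lam : ℝ, ∀ p ∈ X \ K, ∀ q ∈ X \ K,
        innerEDist (X \ K) p q ≤ ENNReal.ofReal (lam * ‖p - q‖) := by
  simp only [← compl_eq_univ_sdiff] at hbij hbil
  obtain ⟨r, hK₁r⟩ := hK₁.isBounded.subset_closedBall 0
  have hψ : LipschitzOnWith l₂.toNNReal ψ K₁ᶜ := .of_dist_le' fun p hp q hq => by
    simpa only [dist_eq_norm] using (hbil p hp q hq).2
  have hXK := image_compl_closedBall_eq_diff hK₁r hbij hl₁ fun p hp q hq => by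
    simpa only [dist_eq_norm] using (hbil p hp q hq).1
  refine ⟨K₂ ∪ closure (ψ '' (closedBall 0 r \ K₁)), hK₂.union (hψ.isBounded_image
    (isBounded_closedBall.subset sdiff_subset) fun _ h => h.2).isCompact_closure,
    9 * l₂.toNNReal / l₁, ?_⟩
  rw [← hXK]
  rintro _ ⟨a, ha, rfl⟩ _ ⟨b, hb, rfl⟩
  obtain ⟨g, hg, rfl, rfl, hgnorm⟩ := exists_lipschitzWith_path_min_norm_le (by simpa) a b
  have hgr (t : ℝ) : g t ∈ (closedBall 0 r)ᶜ := by
    simp only [mem_compl_iff, mem_closedBall_zero_iff, not_le] at ha hb ⊢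
    exact (lt_min ha hb).trans_le (hgnorm t)
  have hgK (t : ℝ) : g t ∈ K₁ᶜ := compl_subset_compl.2 hK₁r (hgr t)
  calc innerEDist (ψ '' (closedBall 0 r)ᶜ) (ψ (g 0)) (ψ (g 1))
      ≤ (l₂.toNNReal * (9 * ‖g 0 - g 1‖₊) : ℝ≥0) :=
        innerEDist_le_of_lipschitzOnWith_s5 (hψ.comp hg.lipschitzOnWith fun t _ => hgK t)
          fun t _ => mem_image_of_mem ψ (hgr t)
    _ ≤ ENNReal.ofReal (9 * l₂.toNNReal / l₁ * ‖ψ (g 0) - ψ (g 1)‖) := by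
        rw [← ENNReal.ofReal_coe_nnreal]
        refine ENNReal.ofReal_le_ofReal ?_
        rw [div_mul_eq_mul_div, le_div_iff₀ hl₁]
        have := (hbil _ (hgK 0) _ (hgK 1)).1
        push_cast
        nlinarith [l₂.toNNReal.2]

/-- If a closed unbounded set `X ⊆ ℝⁿ` is bi-Lipschitz homeomorphic at infinity to
`ℝᵏ` with `k > 1`, then outside some compact set `X` is Lipschitz normally embedded. -/
theorem LNE_of_lipschitz_regular_at_infinity (n k : ℕ) (hk : 1 < k)
    (X : Set (EuclideanSpace ℝ (Fin n))) (hXcl : IsClosed X) (hXub : ¬ Bornology.IsBounded X)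
    (K₁ : Set (EuclideanSpace ℝ (Fin k))) (hK₁ : IsCompact K₁)
    (K₂ : Set (EuclideanSpace ℝ (Fin n))) (hK₂ : IsCompact K₂)
    (ψ : EuclideanSpace ℝ (Fin k) → EuclideanSpace ℝ (Fin n))
    (hbij : Set.BijOn ψ (Set.univ \ K₁) (X \ K₂))
    (l₁ l₂ : ℝ) (hl₁ : 0 < l₁)
    (hbil : ∀ p ∈ Set.univ \ K₁, ∀ q ∈ Set.univ \ K₁,
      l₁ * ‖p - q‖ ≤ ‖ψ p - ψ q‖ ∧ ‖ψ p - ψ q‖ ≤ l₂ * ‖p - q‖) :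
    ∃ K : Set (EuclideanSpace ℝ (Fin n)), IsCompact K ∧
      ∃ lam : ℝ, ∀ p ∈ X \ K, ∀ q ∈ X \ K,
        innerEDist (X \ K) p q ≤ ENNReal.ofReal (lam * ‖p - q‖) :=
  LNE_of_lipschitz_regular_at_infinity_general n k hk X K₁ hK₁ K₂ hK₂ ψ hbij l₁ l₂ hl₁ hbil

end
end

section
/- Let X ⊆ ℂ^n be a set whose tangent cone at infinity C_∞(X) is a complex linear subspace L, and choose coordinates (x,y) with L = {(x,y) : y = 0}. Then there exist a constant C > 0 and a compact set K ⊆ ℂ^n such that ‖y‖ ≤ C‖x‖ for all (x,y) ∈ X \ K. -/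
/-!
If the bound failed, there would be points `z n ∈ X` with `‖z n‖ → ∞` whose directions
`z n / ‖z n‖` have `x`-part tending to `0`. By Blaschke's selection theorem on the unit sphere,
a subsequence of the rescaled sphere slices of `X` through the `z n` converges in the Hausdorff
distance; this yields a tangent cone at infinity containing a cluster point `v` of those
directions. That cone must be `L`, so `yPart v = 0`, and with `xPart v = 0` this contradicts
`‖v‖ = 1`.
-/

open Set Filter Metric

/-- `E` is a tangent cone of `X` at infinity: for some sequence `t_j → ∞`, the rescaled
sphere slices `(1/t_j)(X ∩ {‖x‖ = t_j})` converge in the Hausdorff sense to a subset `D`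
of the unit sphere, and `E` is the cone over `D`. -/
def IsTangentConeAtInfinity {V : Type*} [NormedAddCommGroup V] [NormedSpace ℝ V]
    (X E : Set V) : Prop :=
  ∃ (t : ℕ → ℝ) (D : Set V),
    (∀ j, 0 < t j) ∧ Tendsto t atTop atTop ∧ D ⊆ Metric.sphere (0 : V) 1 ∧
    Tendsto (fun j => EMetric.hausdorffEdist
        ((fun x => (t j)⁻¹ • x) '' (X ∩ Metric.sphere (0 : V) (t j))) D) atTop (nhds 0) ∧
    E = {x | ∃ s : ℝ, 0 ≤ s ∧ ∃ v ∈ D, x = s • v}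

/-- In coordinates `ℂⁿ = ℂᵈ × ℂᵉ`, the first (`x`) component of `z`. -/
def xPart {d e : ℕ} (z : EuclideanSpace ℂ (Fin (d + e))) : EuclideanSpace ℂ (Fin d) :=
  WithLp.toLp 2 (fun i => z (Fin.castAdd e i))

/-- In coordinates `ℂⁿ = ℂᵈ × ℂᵉ`, the second (`y`) component of `z`. -/
def yPart {d e : ℕ} (z : EuclideanSpace ℂ (Fin (d + e))) : EuclideanSpace ℂ (Fin e) :=
  WithLp.toLp 2 (fun i => z (Fin.natAdd d i))

open scoped Topology

theorem MapClusterPt.eq_of_tendsto {X ι : Type*} [TopologicalSpace X] [T2Space X]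
    {l : Filter ι} {f : ι → X} {a b : X} (ha : MapClusterPt a l f) (hb : Tendsto f l (𝓝 b)) :
    a = b :=
  eq_of_nhds_neBot ⟨ne_bot_of_le_ne_bot ha.ne (inf_le_inf_left _ hb)⟩

theorem mem_closure_of_tendsto_hausdorffEDist {α ι : Type*} [PseudoEMetricSpace α]
    {l : Filter ι} {S : ι → Set α} {D : Set α} {p : ι → α} {v : α}
    (hSD : Tendsto (fun i => hausdorffEDist (S i) D) l (𝓝 0)) (hp : ∀ i, p i ∈ S i)
    (hv : MapClusterPt v l p) : v ∈ closure D := by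
  have hpD : Tendsto (fun i => infEDist (p i) D) l (𝓝 0) :=
    tendsto_of_tendsto_of_tendsto_of_le_of_le tendsto_const_nhds hSD (fun _ => zero_le)
      fun i => infEDist_le_hausdorffEDist_of_mem (hp i)
  rw [mem_closure_iff_infEDist_zero]
  exact (hv.continuousAt_comp continuous_infEDist.continuousAt).eq_of_tendsto hpD

theorem exists_subseq_tendsto_hausdorffEDist {α : Type*} [EMetricSpace α] {K : Set α}
    (hK : IsCompact K) {S : ℕ → Set α} (hS : ∀ n, S n ⊆ K) :
    ∃ D, IsClosed D ∧ D ⊆ K ∧ ∃ φ : ℕ → ℕ, StrictMono φ ∧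
      Tendsto (fun n => hausdorffEDist (S (φ n)) D) atTop (𝓝 0) := by
  have : CompactSpace K := isCompact_iff_compactSpace.1 hK
  -- `Set K` with the Hausdorff uniformity is compact: Blaschke's selection theorem.
  let : PseudoEMetricSpace (Set K) := PseudoEMetricSpace.hausdorff
  obtain ⟨D, φ, hφ, hD⟩ := CompactSpace.tendsto_subseq fun n => ((↑) : K → α) ⁻¹' S n
  have himage : ∀ T : Set K, ∀ n, hausdorffEDist (S (φ n)) ((↑) '' T) =
      hausdorffEDist (((↑) : K → α) ⁻¹' S (φ n)) T := fun T n => by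
    rw [← hausdorffEDist_image isometry_subtype_coe, Subtype.image_preimage_coe,
      inter_eq_self_of_subset_right (hS _)]
  refine ⟨closure ((↑) '' D), isClosed_closure,
    hK.isClosed.closure_subset_iff.2 (Subtype.coe_image_subset _ _), φ, hφ, ?_⟩
  simp only [hausdorffEDist_closure_right, himage]
  exact (tendsto_iff_edist_tendsto_0).1 hD

theorem image_inv_smul_sphere_subset {V : Type*} [NormedAddCommGroup V] [NormedSpace ℝ V]
    {r : ℝ} (hr : 0 < r) (X : Set V) :
    (fun x => r⁻¹ • x) '' (X ∩ sphere 0 r) ⊆ sphere 0 1 := by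
  rintro _ ⟨x, ⟨-, hx⟩, rfl⟩
  rw [mem_sphere_zero_iff_norm] at hx ⊢
  rw [norm_smul, Real.norm_of_nonneg (inv_nonneg.2 hr.le), hx, inv_mul_cancel₀ hr.ne']

theorem exists_isTangentConeAtInfinity_mapClusterPt {V : Type*} [NormedAddCommGroup V]
    [NormedSpace ℝ V] [ProperSpace V] {X : Set V} {z : ℕ → V} (hzX : ∀ n, z n ∈ X)
    (hz0 : ∀ n, z n ≠ 0) (hz : Tendsto (fun n => ‖z n‖) atTop atTop) :
    ∃ E, IsTangentConeAtInfinity X E ∧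
      ∃ v ∈ E, ‖v‖ = 1 ∧ MapClusterPt v atTop fun n => ‖z n‖⁻¹ • z n := by
  have ht : ∀ n, 0 < ‖z n‖ := fun n => norm_pos_iff.2 (hz0 n)
  set S : ℕ → Set V := fun n => (fun x => ‖z n‖⁻¹ • x) '' (X ∩ sphere 0 ‖z n‖)
  have hpS : ∀ n, ‖z n‖⁻¹ • z n ∈ S n := fun n =>
    mem_image_of_mem _ ⟨hzX n, mem_sphere_zero_iff_norm.2 rfl⟩
  obtain ⟨D, hDc, hDs, ψ, hψ, hSD⟩ := exists_subseq_tendsto_hausdorffEDist (isCompact_sphere 0 1)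
    fun n => image_inv_smul_sphere_subset (ht n) X
  obtain ⟨v, hv1, hv⟩ := (isCompact_sphere (0 : V) 1).exists_mapClusterPt (f := atTop)
    (u := fun n => ‖z (ψ n)‖⁻¹ • z (ψ n))
    (tendsto_principal.2 (.of_forall fun n => image_inv_smul_sphere_subset (ht _) X (hpS _)))
  have hvD : v ∈ D := hDc.closure_subset (mem_closure_of_tendsto_hausdorffEDist hSD
    (fun n => hpS (ψ n)) hv)
  refine ⟨_, ⟨fun n => ‖z (ψ n)‖, D, fun n => ht _, hz.comp hψ.tendsto_atTop, hDs, hSD, rfl⟩,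
    v, ⟨1, zero_le_one, v, hvD, (one_smul ℝ v).symm⟩, mem_sphere_zero_iff_norm.1 hv1,
    hv.of_comp hψ.tendsto_atTop⟩

theorem norm_sq_eq_norm_xPart_sq_add_norm_yPart_sq {d e : ℕ}
    (z : EuclideanSpace ℂ (Fin (d + e))) : ‖z‖ ^ 2 = ‖xPart z‖ ^ 2 + ‖yPart z‖ ^ 2 := by
  simp only [EuclideanSpace.norm_sq_eq, Fin.sum_univ_add, xPart, yPart]

theorem norm_yPart_le {d e : ℕ} (z : EuclideanSpace ℂ (Fin (d + e))) : ‖yPart z‖ ≤ ‖z‖ :=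
  pow_le_pow_iff_left₀ (norm_nonneg _) (norm_nonneg _) two_ne_zero |>.1 <| by
    rw [norm_sq_eq_norm_xPart_sq_add_norm_yPart_sq z]
    exact le_add_of_nonneg_left (sq_nonneg _)

theorem xPart_smul {d e : ℕ} (c : ℝ) (z : EuclideanSpace ℂ (Fin (d + e))) :
    xPart (c • z) = c • xPart z := by
  ext i; simp [xPart]

theorem continuous_xPart {d e : ℕ} : Continuous (xPart (d := d) (e := e)) := by
  unfold xPart; fun_prop

theorem norm_xPart_inv_norm_smul_le {d e : ℕ} {z : EuclideanSpace ℂ (Fin (d + e))} {c : ℝ}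
    (hc : 0 < c) (h : c * ‖xPart z‖ ≤ ‖yPart z‖) : ‖xPart (‖z‖⁻¹ • z)‖ ≤ c⁻¹ := by
  rcases eq_or_ne z 0 with rfl | hz
  · rw [xPart_smul]
    simpa using hc.le
  have hx : ‖xPart z‖ ≤ c⁻¹ * ‖z‖ := (le_inv_mul_iff₀ hc).2 (h.trans (norm_yPart_le z))
  calc ‖xPart (‖z‖⁻¹ • z)‖ = ‖z‖⁻¹ * ‖xPart z‖ := by
        rw [xPart_smul, norm_smul, Real.norm_of_nonneg (inv_nonneg.2 (norm_nonneg z))]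
    _ ≤ ‖z‖⁻¹ * (c⁻¹ * ‖z‖) := by gcongr
    _ = c⁻¹ := by field_simp [norm_ne_zero_iff.2 hz]

theorem y_dominated_by_x_outside_compact_general (d e : ℕ)
    (X : Set (EuclideanSpace ℂ (Fin (d + e))))
    (L : Set (EuclideanSpace ℂ (Fin (d + e))))
    (hL : L = {z | yPart z = 0})
    (huniq : ∀ E, IsTangentConeAtInfinity X E → E = L) :
    ∃ C : ℝ, 0 < C ∧ ∃ K : Set (EuclideanSpace ℂ (Fin (d + e))), IsCompact K ∧
      ∀ z ∈ X \ K, ‖yPart z‖ ≤ C * ‖xPart z‖ := by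
  by_contra! hcon
  have hbad : ∀ n : ℕ, ∃ z ∈ X, (n + 1 : ℝ) < ‖z‖ ∧ (n + 1) * ‖xPart z‖ < ‖yPart z‖ := by
    intro n
    obtain ⟨z, ⟨hzX, hzK⟩, hz⟩ :=
      hcon (n + 1) (by positivity) (closedBall 0 (n + 1)) (isCompact_closedBall _ _)
    exact ⟨z, hzX, by simpa using hzK, hz⟩
  choose z hzX hzn hxy using hbad
  have hn : Tendsto (fun n : ℕ => (n + 1 : ℝ)) atTop atTop :=
    tendsto_atTop_add_const_right _ 1 tendsto_natCast_atTop_atTop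
  obtain ⟨E, hE, v, hvE, hv1, hv⟩ := exists_isTangentConeAtInfinity_mapClusterPt hzX
    (fun n => norm_pos_iff.1 (lt_trans (by positivity) (hzn n)))
    (tendsto_atTop_mono (fun n => (hzn n).le) hn)
  have hy : yPart v = 0 := by rwa [huniq E hE, hL] at hvE
  have hx : xPart v = 0 := (hv.continuousAt_comp continuous_xPart.continuousAt).eq_of_tendsto <|
    squeeze_zero_norm (fun n => norm_xPart_inv_norm_smul_le (by positivity) (hxy n).le)
      (tendsto_inv_atTop_zero.comp hn)
  simpa [hx, hy, hv1] using norm_sq_eq_norm_xPart_sq_add_norm_yPart_sq v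

/-- If the tangent cone at infinity of `X ⊆ ℂⁿ` is the linear subspace
`L = {(x,y) : y = 0}` (in coordinates `ℂⁿ = ℂᵈ × ℂᵉ`), then there are `C > 0` and a
compact `K` with `‖y‖ ≤ C ‖x‖` for all `(x,y) ∈ X \ K`. -/
theorem y_dominated_by_x_outside_compact (d e : ℕ)
    (X : Set (EuclideanSpace ℂ (Fin (d + e))))
    (L : Set (EuclideanSpace ℂ (Fin (d + e))))
    (hL : L = {z | yPart z = 0})
    (hcone : IsTangentConeAtInfinity X L)
    (huniq : ∀ E, IsTangentConeAtInfinity X E → E = L) :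
    ∃ C : ℝ, 0 < C ∧ ∃ K : Set (EuclideanSpace ℂ (Fin (d + e))), IsCompact K ∧
      ∀ z ∈ X \ K, ‖yPart z‖ ≤ C * ‖xPart z‖ :=
  y_dominated_by_x_outside_compact_general d e X L hL huniq
end

section
/- The real algebraic surface X = {(x,y,z) ∈ ℝ³ : x² + y² = z³} is Lipschitz regular at infinity: there exist a compact set K ⊆ ℝ³ and a compact set K' ⊆ ℝ² and a bi-Lipschitz homeomorphism X \ K → ℝ² \ K'. In particular, Lipschitz regularity at infinity of a real algebraic set does not imply it is an affine subspace. -/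
/-!
The projection `(x, y, z) ↦ (x, y)` does the job. On the surface `z` is the cube root of
`x² + y²`, so the projection is a bijection onto `ℝ²`, and it is 1-Lipschitz. Conversely, on the
surface `‖(x, y)‖ = z^{3/2}`, and `z ↦ z^{3/2}` expands distances where `z ≥ 1`, which holds
outside the ball of radius 2. There `|Δz| ≤ ‖Δ(x, y)‖`, hence `‖Δp‖ ≤ √2 ‖Δ(x, y)‖`.
-/

open Set Metric

theorem sub_le_sub_of_sq_eq_cube {s t σ τ : ℝ} (ht : 1 ≤ t) (hts : t ≤ s) (hσ : 0 ≤ σ)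
    (hτ : 0 ≤ τ) (hσs : σ ^ 2 = s ^ 3) (hτt : τ ^ 2 = t ^ 3) : s - t ≤ σ - τ := by
  have hτσ : τ ≤ σ := by
    rw [← pow_le_pow_iff_left₀ hτ hσ two_ne_zero, hσs, hτt]
    gcongr
  have hσs2 : σ ≤ s ^ 2 := by nlinarith
  have hτt2 : τ ≤ t ^ 2 := by nlinarith
  refine le_of_mul_le_mul_right ?_ (by nlinarith : 0 < s ^ 2 + s * t + t ^ 2)
  calc (s - t) * (s ^ 2 + s * t + t ^ 2) = (σ - τ) * (σ + τ) := by linear_combination hτt - hσs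
    _ ≤ (σ - τ) * (s ^ 2 + s * t + t ^ 2) :=
      mul_le_mul_of_nonneg_left (by nlinarith) (sub_nonneg.2 hτσ)

theorem abs_sub_le_abs_sub_of_sq_eq_cube {s t σ τ : ℝ} (hs : 1 ≤ s) (ht : 1 ≤ t) (hσ : 0 ≤ σ)
    (hτ : 0 ≤ τ) (hσs : σ ^ 2 = s ^ 3) (hτt : τ ^ 2 = t ^ 3) : |s - t| ≤ |σ - τ| := by
  rcases le_total t s with hts | hst
  · have := sub_le_sub_of_sq_eq_cube ht hts hσ hτ hσs hτt
    rwa [abs_of_nonneg (sub_nonneg.2 hts), abs_of_nonneg (by linarith)]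
  · have := sub_le_sub_of_sq_eq_cube hs hst hτ hσ hτt hσs
    rwa [abs_sub_comm, abs_of_nonneg (sub_nonneg.2 hst), abs_sub_comm,
      abs_of_nonneg (by linarith)]

theorem Set.BijOn.sdiff_image_inter {α β : Type*} {f : α → β} {s K : Set α} {t : Set β}
    (hf : BijOn f s t) : BijOn f (s \ K) (t \ f '' (s ∩ K)) := by
  convert hf.subset_left sdiff_subset
  rw [hf.injOn.image_sdiff, hf.image_eq]

def cuspSurface : Set (EuclideanSpace ℝ (Fin 3)) := {p | p 0 ^ 2 + p 1 ^ 2 = p 2 ^ 3}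

def horizontalProj (p : EuclideanSpace ℝ (Fin 3)) : EuclideanSpace ℝ (Fin 2) := !₂[p 0, p 1]

@[simp] theorem horizontalProj_apply_zero (p : EuclideanSpace ℝ (Fin 3)) :
    horizontalProj p 0 = p 0 := rfl

@[simp] theorem horizontalProj_apply_one (p : EuclideanSpace ℝ (Fin 3)) :
    horizontalProj p 1 = p 1 := rfl

theorem continuous_horizontalProj : Continuous horizontalProj := by
  unfold horizontalProj
  fun_prop

theorem horizontalProj_sub (p q : EuclideanSpace ℝ (Fin 3)) :
    horizontalProj (p - q) = horizontalProj p - horizontalProj q := by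
  ext i
  fin_cases i <;> rfl

theorem sq_norm_horizontalProj (p : EuclideanSpace ℝ (Fin 3)) :
    ‖horizontalProj p‖ ^ 2 = p 0 ^ 2 + p 1 ^ 2 := by
  simp [EuclideanSpace.real_norm_sq_eq, Fin.sum_univ_two]

theorem sq_norm_eq_sq_norm_horizontalProj_add (p : EuclideanSpace ℝ (Fin 3)) :
    ‖p‖ ^ 2 = ‖horizontalProj p‖ ^ 2 + p 2 ^ 2 := by
  simp [EuclideanSpace.real_norm_sq_eq, Fin.sum_univ_three]

theorem norm_horizontalProj_le (p : EuclideanSpace ℝ (Fin 3)) : ‖horizontalProj p‖ ≤ ‖p‖ := by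
  refine le_of_sq_le_sq ?_ (norm_nonneg p)
  rw [sq_norm_eq_sq_norm_horizontalProj_add p]
  exact le_add_of_nonneg_right (sq_nonneg _)

theorem isClosed_cuspSurface : IsClosed cuspSurface :=
  isClosed_eq (by fun_prop) (by fun_prop)

theorem nonneg_of_mem_cuspSurface {p : EuclideanSpace ℝ (Fin 3)} (hp : p ∈ cuspSurface) :
    0 ≤ p 2 :=
  Odd.pow_nonneg_iff ⟨1, rfl⟩ |>.mp (hp ▸ by positivity)

theorem norm_horizontalProj_sq_eq_cube {p : EuclideanSpace ℝ (Fin 3)} (hp : p ∈ cuspSurface) :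
    ‖horizontalProj p‖ ^ 2 = p 2 ^ 3 := by
  rw [sq_norm_horizontalProj, hp]

theorem one_le_of_mem_cuspSurface_of_two_lt_norm {p : EuclideanSpace ℝ (Fin 3)}
    (hp : p ∈ cuspSurface) (hnorm : 2 < ‖p‖) : 1 ≤ p 2 := by
  have hz := nonneg_of_mem_cuspSurface hp
  have hsq : 2 ^ 2 < p 2 ^ 3 + p 2 ^ 2 := by
    rw [← norm_horizontalProj_sq_eq_cube hp, ← sq_norm_eq_sq_norm_horizontalProj_add]
    gcongr
  by_contra! hz1
  nlinarith [pow_le_one₀ hz hz1.le (n := 2), pow_le_one₀ hz hz1.le (n := 3)]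

theorem injOn_horizontalProj : InjOn horizontalProj cuspSurface := by
  intro p hp q hq hpq
  have h0 : p 0 = q 0 := congr($hpq 0)
  have h1 : p 1 = q 1 := congr($hpq 1)
  have h2 : p 2 = q 2 := by
    rw [← Odd.pow_inj (n := 3) ⟨1, rfl⟩, ← hp, ← hq, h0, h1]
  ext i
  fin_cases i <;> assumption

theorem bijOn_horizontalProj : BijOn horizontalProj cuspSurface univ := by
  refine ⟨mapsTo_univ _ _, injOn_horizontalProj, fun v _ => ?_⟩
  have hr : 0 ≤ v 0 ^ 2 + v 1 ^ 2 := by positivity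
  refine ⟨!₂[v 0, v 1, (v 0 ^ 2 + v 1 ^ 2) ^ (3⁻¹ : ℝ)], ?_, ?_⟩
  · show v 0 ^ 2 + v 1 ^ 2 = ((v 0 ^ 2 + v 1 ^ 2) ^ (3⁻¹ : ℝ)) ^ 3
    exact_mod_cast (Real.rpow_inv_natCast_pow hr three_ne_zero).symm
  · ext i
    fin_cases i <;> rfl

theorem abs_sub_le_norm_horizontalProj_sub {p q : EuclideanSpace ℝ (Fin 3)}
    (hp : p ∈ cuspSurface) (hq : q ∈ cuspSurface) (hp1 : 1 ≤ p 2) (hq1 : 1 ≤ q 2) :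
    |p 2 - q 2| ≤ ‖horizontalProj p - horizontalProj q‖ :=
  (abs_sub_le_abs_sub_of_sq_eq_cube hp1 hq1 (norm_nonneg _) (norm_nonneg _)
    (norm_horizontalProj_sq_eq_cube hp) (norm_horizontalProj_sq_eq_cube hq)).trans
    (abs_norm_sub_norm_le _ _)

theorem norm_sub_le_sqrt_two_mul_norm_horizontalProj_sub {p q : EuclideanSpace ℝ (Fin 3)}
    (hp : p ∈ cuspSurface) (hq : q ∈ cuspSurface) (hp1 : 1 ≤ p 2) (hq1 : 1 ≤ q 2) :
    ‖p - q‖ ≤ √2 * ‖horizontalProj p - horizontalProj q‖ := by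
  have hz := abs_sub_le_norm_horizontalProj_sub hp hq hp1 hq1
  refine le_of_sq_le_sq ?_ (by positivity)
  rw [mul_pow, Real.sq_sqrt zero_le_two, sq_norm_eq_sq_norm_horizontalProj_add,
    horizontalProj_sub]
  have : (p - q) 2 ^ 2 ≤ ‖horizontalProj p - horizontalProj q‖ ^ 2 := by
    rw [← sq_abs]
    exact pow_le_pow_left₀ (abs_nonneg _) hz 2
  linarith

/-- The real algebraic surface `x² + y² = z³` in `ℝ³` is Lipschitz regular at infinity:
outside compact sets it is bi-Lipschitz homeomorphic to the complement of a compact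
subset of `ℝ²`. (In particular, Lipschitz regularity at infinity of a real algebraic
set does not force it to be an affine subspace.) -/
theorem cusp_surface_lipschitz_regular_at_infinity :
    ∃ (K : Set (EuclideanSpace ℝ (Fin 3))) (K' : Set (EuclideanSpace ℝ (Fin 2)))
      (φ : EuclideanSpace ℝ (Fin 3) → EuclideanSpace ℝ (Fin 2)),
      IsCompact K ∧ IsCompact K' ∧
      Set.BijOn φ ({p : EuclideanSpace ℝ (Fin 3) | p 0 ^ 2 + p 1 ^ 2 = p 2 ^ 3} \ K)
        (Set.univ \ K') ∧
      ∃ l₁ l₂ : ℝ, 0 < l₁ ∧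
        ∀ p ∈ ({p : EuclideanSpace ℝ (Fin 3) | p 0 ^ 2 + p 1 ^ 2 = p 2 ^ 3} \ K),
        ∀ q ∈ ({p : EuclideanSpace ℝ (Fin 3) | p 0 ^ 2 + p 1 ^ 2 = p 2 ^ 3} \ K),
          l₁ * ‖p - q‖ ≤ ‖φ p - φ q‖ ∧ ‖φ p - φ q‖ ≤ l₂ * ‖p - q‖ := by
  have hK : IsCompact (closedBall (0 : EuclideanSpace ℝ (Fin 3)) 2) := isCompact_closedBall 0 2
  refine ⟨closedBall 0 2, horizontalProj '' (cuspSurface ∩ closedBall 0 2), horizontalProj, hK,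
    (hK.inter_left isClosed_cuspSurface).image continuous_horizontalProj,
    bijOn_horizontalProj.sdiff_image_inter, (√2)⁻¹, 1, by positivity, ?_⟩
  have one_le : ∀ p ∈ cuspSurface \ closedBall 0 2, 1 ≤ p 2 := fun p hp =>
    one_le_of_mem_cuspSurface_of_two_lt_norm hp.1 (by simpa using hp.2)
  intro p hp q hq
  constructor
  · rw [inv_mul_le_iff₀ (by positivity)]
    exact norm_sub_le_sqrt_two_mul_norm_horizontalProj_sub hp.1 hq.1 (one_le p hp) (one_le q hq)
  · rw [one_mul, ← horizontalProj_sub]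
    exact norm_horizontalProj_le _
end

section
/- The set X = {(x, sin x) : x ∈ ℝ} ⊆ ℝ² is Lipschitz normally embedded and its tangent cone at infinity is the line {(x,0) : x ∈ ℝ}, yet X is not contained in any affine line (and is not an algebraic set). -/
open Set Filter Metric

noncomputable section

/-- A real algebraic subset of `ℝⁿ`: the common zero set of a family of polynomials. -/
def IsRealAlgebraicSet {n : ℕ} (X : Set (EuclideanSpace ℝ (Fin n))) : Prop :=
  ∃ S : Set (MvPolynomial (Fin n) ℝ),
    X = {x | ∀ p ∈ S, MvPolynomial.eval (WithLp.ofLp x : Fin n → ℝ) p = 0}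

/-!
Sine is 1-Lipschitz, so `x ↦ (x, sin x)` is Lipschitz and carries segments to paths in the graph
of length at most `2 |x - y|`. The graph lies in the band `|y| ≤ 1`, so a point of norm `t` on it,
rescaled by `1 / t`, lies within `2 / t` of `(±1, 0)`; by the intermediate value theorem every
sphere meets the graph on both sides, so the rescaled sphere slices converge in the Hausdorff
sense to `{(1, 0), (-1, 0)}`, whose cone is the `x`-axis. The points `(0, 0)`, `(π/2, 1)`,
`(π, 0)` are not collinear. A polynomial vanishing at all `(kπ, 0)` vanishes on the whole
`x`-axis, in particular at `(1, 0)`, which is not on the graph.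
-/

open scoped ENNReal NNReal Topology

theorem eVariationOn_coe_unitInterval :
    eVariationOn (fun t : unitInterval => (t : ℝ)) univ = 1 := by
  have h := (Subtype.mono_coe (· ∈ Icc (0 : ℝ) 1)).monotoneOn univ
    |>.eVariationOn_eq (mem_univ 0) (mem_univ 1)
  have hIcc : Icc (0 : unitInterval) 1 = univ :=
    eq_univ_of_forall fun t => ⟨unitInterval.nonneg', unitInterval.le_one'⟩
  rw [univ_inter, hIcc] at h
  simpa using h

theorem innerEDist_le_eVariationOn_s19 {E : Type*} [EMetricSpace E] {X : Set E} {p q : E}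
    (γ : Path p q) (hγ : range γ ⊆ X) :
    innerEDist X p q ≤ eVariationOn (fun t => γ t) univ :=
  iInf₂_le γ hγ

theorem innerEDist_le_of_lipschitzWith {E F : Type*} [EMetricSpace E] [NormedAddCommGroup F]
    [NormedSpace ℝ F] {X : Set E} {g : F → E} {K : ℝ≥0} (hg : LipschitzWith K g)
    (hX : range g ⊆ X) (a b : F) :
    innerEDist X (g a) (g b) ≤ K * edist a b := by
  let γ := (Path.segment a b).map hg.continuous
  calc innerEDist X (g a) (g b)
      ≤ eVariationOn (fun t => γ t) univ :=
        innerEDist_le_eVariationOn_s19 γ ((range_comp_subset_range _ g).trans hX)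
    _ = eVariationOn ((g ∘ AffineMap.lineMap a b) ∘ fun t : unitInterval => (t : ℝ)) univ := rfl
    _ ≤ (K * nndist a b : ℝ≥0) * eVariationOn (fun t : unitInterval => (t : ℝ)) univ :=
        (hg.comp (lipschitzWith_lineMap a b)).lipschitzOnWith.comp_eVariationOn_le
          (mapsTo_univ _ _)
    _ = K * edist a b := by
        rw [eVariationOn_coe_unitInterval, mul_one, ENNReal.coe_mul, edist_nndist]

theorem lipschitzWith_graph {f : ℝ → ℝ} {K : ℝ≥0} (hf : LipschitzWith K f) :
    LipschitzWith (1 + K) fun x => !₂[x, f x] := by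
  refine LipschitzWith.of_dist_le_mul fun x y => ?_
  have hfxy : dist (f x) (f y) ≤ K * dist x y := hf.dist_le_mul x y
  have hsum : dist (!₂[x, f x]) !₂[y, f y] ≤ dist x y + dist (f x) (f y) := by
    rw [EuclideanSpace.dist_eq, Real.sqrt_le_iff]
    refine ⟨by positivity, ?_⟩
    simp only [Fin.sum_univ_two, Fin.isValue, Matrix.cons_val_zero, Matrix.cons_val_one,
      Matrix.cons_val_fin_one]
    nlinarith [dist_nonneg (x := x) (y := y), dist_nonneg (x := f x) (y := f y)]
  push_cast
  linarith

theorem MvPolynomial.eval_add_smul_eq_zero_of_infinite {σ K : Type*} [Field K]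
    {P : MvPolynomial σ K} {a v : σ → K} {s : Set K} (hs : s.Infinite)
    (h : ∀ x ∈ s, eval (a + x • v) P = 0) (x : K) : eval (a + x • v) P = 0 := by
  set q : Polynomial K := aeval (fun i => Polynomial.C (a i) + Polynomial.X * Polynomial.C (v i)) P
  have hq : ∀ y, q.eval y = eval (a + y • v) P := by
    intro y
    have hpt : (fun i => Polynomial.aeval y
        (Polynomial.C (a i) + Polynomial.X * Polynomial.C (v i))) = a + y • v := by
      funext i
      simp only [Polynomial.X_mul_C, Polynomial.coe_aeval_eq_eval, Polynomial.eval_add,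
        Polynomial.eval_C, Polynomial.eval_mul, Polynomial.eval_X, Pi.add_apply, Pi.smul_apply,
        smul_eq_mul, add_right_inj]
      ring
    rw [← Polynomial.coe_aeval_eq_eval, comp_aeval_apply, hpt]
    rfl
  have hq0 : q = 0 :=
    Polynomial.eq_zero_of_infinite_isRoot q (hs.mono fun y hy => (hq y).trans (h y hy))
  rw [← hq, hq0, Polynomial.eval_zero]

def sinGraph (x : ℝ) : EuclideanSpace ℝ (Fin 2) := !₂[x, Real.sin x]

theorem range_sinGraph :
    range sinGraph = {p : EuclideanSpace ℝ (Fin 2) | p 1 = Real.sin (p 0)} := by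
  ext p
  constructor
  · rintro ⟨x, rfl⟩
    simp [sinGraph]
  · intro hp
    refine ⟨p 0, ?_⟩
    ext i
    fin_cases i
    · simp [sinGraph]
    · simpa [sinGraph] using hp.symm

theorem lipschitzWith_sinGraph : LipschitzWith 2 sinGraph := by
  have h := lipschitzWith_graph Real.lipschitzWith_sin
  rwa [one_add_one_eq_two] at h

theorem innerEDist_range_sinGraph_le {p q : EuclideanSpace ℝ (Fin 2)} (hp : p ∈ range sinGraph)
    (hq : q ∈ range sinGraph) : innerEDist (range sinGraph) p q ≤ 2 * edist p q := by
  obtain ⟨a, rfl⟩ := hp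
  obtain ⟨b, rfl⟩ := hq
  calc innerEDist (range sinGraph) (sinGraph a) (sinGraph b)
      ≤ 2 * edist a b := innerEDist_le_of_lipschitzWith lipschitzWith_sinGraph subset_rfl a b
    _ ≤ 2 * edist (sinGraph a) (sinGraph b) := by
        gcongr
        simpa [sinGraph] using PiLp.edist_apply_le (sinGraph a) (sinGraph b) 0

theorem cross_sub_eq_zero_of_mem_line {a v p q r : EuclideanSpace ℝ (Fin 2)}
    (hp : p ∈ {x | ∃ t : ℝ, x = a + t • v}) (hq : q ∈ {x | ∃ t : ℝ, x = a + t • v})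
    (hr : r ∈ {x | ∃ t : ℝ, x = a + t • v}) :
    (q 0 - p 0) * (r 1 - p 1) - (q 1 - p 1) * (r 0 - p 0) = 0 := by
  obtain ⟨s, rfl⟩ := hp
  obtain ⟨t, rfl⟩ := hq
  obtain ⟨u, rfl⟩ := hr
  simp only [PiLp.add_apply, PiLp.smul_apply, smul_eq_mul]
  ring

theorem range_sinGraph_not_subset_line (a v : EuclideanSpace ℝ (Fin 2)) :
    ¬ range sinGraph ⊆ {x | ∃ t : ℝ, x = a + t • v} := by
  intro h
  have := cross_sub_eq_zero_of_mem_line (h ⟨0, rfl⟩) (h ⟨Real.pi / 2, rfl⟩) (h ⟨Real.pi, rfl⟩)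
  simp [sinGraph, Real.pi_ne_zero] at this

theorem not_isRealAlgebraicSet_range_sinGraph : ¬ IsRealAlgebraicSet (range sinGraph) := by
  rintro ⟨S, hS⟩
  have hline : ∀ x : ℝ, (0 + x • ![1, 0] : Fin 2 → ℝ) = ![x, 0] := fun x => by
    ext i; fin_cases i <;> simp
  have hzeros : ∀ P ∈ S, ∀ k : ℕ,
      MvPolynomial.eval (0 + ((k : ℝ) * Real.pi) • ![1, 0] : Fin 2 → ℝ) P = 0 := by
    intro P hP k
    have hk : sinGraph (k * Real.pi) ∈ range sinGraph := ⟨_, rfl⟩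
    rw [hS] at hk
    have hpt : (sinGraph (k * Real.pi)).ofLp = ![(k : ℝ) * Real.pi, 0] := by
      ext i; fin_cases i <;> simp [sinGraph, Real.sin_nat_mul_pi]
    rw [hline, ← hpt]
    exact hk P hP
  have hinf : (range fun k : ℕ => (k : ℝ) * Real.pi).Infinite :=
    infinite_range_of_injective fun j k hjk => by
      exact_mod_cast mul_right_cancel₀ Real.pi_ne_zero hjk
  have h1 : !₂[1, 0] ∈ range sinGraph := by
    rw [hS]
    intro P hP
    have := MvPolynomial.eval_add_smul_eq_zero_of_infinite hinf
      (by rintro _ ⟨k, rfl⟩; exact hzeros P hP k) 1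
    rwa [hline] at this
  rw [range_sinGraph] at h1
  have hsin : 0 < Real.sin 1 :=
    Real.sin_pos_of_pos_of_lt_pi one_pos (lt_trans (by norm_num) Real.pi_gt_three)
  exact hsin.ne (by simpa using h1)

theorem closure_eq_closure_of_tendsto_hausdorffEDist {ι α : Type*} [PseudoEMetricSpace α]
    {l : Filter ι} [l.NeBot] {A : ι → Set α} {s t : Set α}
    (hs : Tendsto (fun i => hausdorffEDist (A i) s) l (𝓝 0))
    (ht : Tendsto (fun i => hausdorffEDist (A i) t) l (𝓝 0)) : closure s = closure t := by
  rw [← hausdorffEDist_zero_iff_closure_eq_closure]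
  refine le_antisymm (ge_of_tendsto (by simpa using hs.add ht) (Eventually.of_forall fun i => ?_))
    bot_le
  calc hausdorffEDist s t ≤ hausdorffEDist s (A i) + hausdorffEDist (A i) t :=
        hausdorffEDist_triangle
    _ = hausdorffEDist (A i) s + hausdorffEDist (A i) t := by rw [hausdorffEDist_comm]

theorem dist_inv_smul_le_of_mem_sphere {p : EuclideanSpace ℝ (Fin 2)} {c t : ℝ} (ht : 0 < t)
    (hp : p ∈ sphere 0 t) (hc : |p 1| ≤ c) (h0 : 0 ≤ p 0) :
    dist (t⁻¹ • p) !₂[1, 0] ≤ 2 * c / t := by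
  rw [mem_sphere_zero_iff_norm] at hp
  have hnorm : t ^ 2 = p 0 ^ 2 + p 1 ^ 2 := by
    rw [← hp, EuclideanSpace.real_norm_sq_eq, Fin.sum_univ_two]
  have hkey : dist p (t • !₂[1, 0]) ≤ 2 * c := by
    rw [EuclideanSpace.dist_eq, Real.sqrt_le_iff]
    refine ⟨by linarith [abs_nonneg (p 1)], ?_⟩
    simp only [Fin.sum_univ_two, Real.dist_eq, sq_abs, Fin.isValue, PiLp.smul_apply,
      Matrix.cons_val_zero, smul_eq_mul, mul_one, Matrix.cons_val_one, Matrix.cons_val_fin_one,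
      mul_zero, sub_zero]
    have htp : p 0 ≤ t := by nlinarith
    have hc2 : p 1 ^ 2 ≤ c ^ 2 := by nlinarith [sq_abs (p 1), abs_nonneg (p 1)]
    nlinarith
  calc dist (t⁻¹ • p) !₂[1, 0] = dist (t⁻¹ • p) (t⁻¹ • t • !₂[1, 0]) := by
        rw [inv_smul_smul₀ ht.ne']
    _ = t⁻¹ * dist p (t • !₂[1, 0]) := by
        rw [dist_smul₀, Real.norm_of_nonneg (inv_nonneg.2 ht.le)]
    _ ≤ t⁻¹ * (2 * c) := by gcongr
    _ = 2 * c / t := by ring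

theorem dist_inv_smul_le_of_mem_sphere_of_nonpos {p : EuclideanSpace ℝ (Fin 2)} {c t : ℝ}
    (ht : 0 < t) (hp : p ∈ sphere 0 t) (hc : |p 1| ≤ c) (h0 : p 0 ≤ 0) :
    dist (t⁻¹ • p) (-!₂[1, 0]) ≤ 2 * c / t := by
  have h := dist_inv_smul_le_of_mem_sphere (p := -p) ht (by simpa using hp) (by simpa using hc)
    (by simpa using h0)
  rwa [smul_neg, dist_neg] at h

theorem hausdorffEDist_inv_smul_sphere_le {X : Set (EuclideanSpace ℝ (Fin 2))} {c t : ℝ}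
    (ht : 0 < t) (hband : ∀ p ∈ X, |p 1| ≤ c) (hright : ∃ p ∈ X ∩ sphere 0 t, 0 ≤ p 0)
    (hleft : ∃ p ∈ X ∩ sphere 0 t, p 0 ≤ 0) :
    hausdorffEDist ((fun x => t⁻¹ • x) '' (X ∩ sphere 0 t)) {!₂[1, 0], -!₂[1, 0]} ≤
      ENNReal.ofReal (2 * c / t) := by
  refine hausdorffEDist_le_of_mem_edist ?_ ?_
  · rintro _ ⟨p, ⟨hpX, hpt⟩, rfl⟩
    rcases le_total 0 (p 0) with h0 | h0
    · exact ⟨_, .inl rfl, (edist_dist _ _).trans_le <| ENNReal.ofReal_le_ofReal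
        (dist_inv_smul_le_of_mem_sphere ht hpt (hband p hpX) h0)⟩
    · exact ⟨_, .inr rfl, (edist_dist _ _).trans_le <| ENNReal.ofReal_le_ofReal
        (dist_inv_smul_le_of_mem_sphere_of_nonpos ht hpt (hband p hpX) h0)⟩
  · rintro _ (rfl | rfl)
    · obtain ⟨p, ⟨hpX, hpt⟩, h0⟩ := hright
      refine ⟨_, mem_image_of_mem _ ⟨hpX, hpt⟩, ?_⟩
      rw [edist_comm, edist_dist]
      exact ENNReal.ofReal_le_ofReal (dist_inv_smul_le_of_mem_sphere ht hpt (hband p hpX) h0)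
    · obtain ⟨p, ⟨hpX, hpt⟩, h0⟩ := hleft
      refine ⟨_, mem_image_of_mem _ ⟨hpX, hpt⟩, ?_⟩
      rw [edist_comm, edist_dist]
      exact ENNReal.ofReal_le_ofReal
        (dist_inv_smul_le_of_mem_sphere_of_nonpos ht hpt (hband p hpX) h0)

theorem cone_pm_unit_eq_axis :
    {x : EuclideanSpace ℝ (Fin 2) | ∃ s : ℝ, 0 ≤ s ∧ ∃ v ∈ ({!₂[1, 0], -!₂[1, 0]} : Set _),
      x = s • v} = {p | p 1 = 0} := by
  ext p
  constructor
  · rintro ⟨s, -, v, (rfl | rfl), rfl⟩ <;> simp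
  · intro (hp : p 1 = 0)
    rcases le_total 0 (p 0) with h0 | h0
    · refine ⟨p 0, h0, _, .inl rfl, ?_⟩
      ext i; fin_cases i <;> simp [hp]
    · refine ⟨-p 0, neg_nonneg.2 h0, _, .inr rfl, ?_⟩
      ext i; fin_cases i <;> simp [hp]

section HorizontalBand

variable {X : Set (EuclideanSpace ℝ (Fin 2))} {c : ℝ}

theorem tendsto_hausdorffEDist_inv_smul_sphere (hband : ∀ p ∈ X, |p 1| ≤ c)
    (hsides : ∀ᶠ t in atTop, (∃ p ∈ X ∩ sphere 0 t, 0 ≤ p 0) ∧ ∃ p ∈ X ∩ sphere 0 t, p 0 ≤ 0)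
    {t : ℕ → ℝ} (hpos : ∀ j, 0 < t j) (htop : Tendsto t atTop atTop) :
    Tendsto (fun j => hausdorffEDist ((fun x => (t j)⁻¹ • x) '' (X ∩ sphere 0 (t j)))
      {!₂[1, 0], -!₂[1, 0]}) atTop (𝓝 0) := by
  have hlim : Tendsto (fun j => ENNReal.ofReal (2 * c / t j)) atTop (𝓝 0) := by
    simpa using ENNReal.tendsto_ofReal (tendsto_const_nhds.div_atTop htop)
  refine tendsto_of_tendsto_of_tendsto_of_le_of_le' tendsto_const_nhds hlim
    (Eventually.of_forall fun _ => zero_le) ?_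
  filter_upwards [htop.eventually hsides] with j hj
  exact hausdorffEDist_inv_smul_sphere_le (hpos j) hband hj.1 hj.2

theorem isTangentConeAtInfinity_of_band (hband : ∀ p ∈ X, |p 1| ≤ c)
    (hsides : ∀ᶠ t in atTop, (∃ p ∈ X ∩ sphere 0 t, 0 ≤ p 0) ∧ ∃ p ∈ X ∩ sphere 0 t, p 0 ≤ 0) :
    IsTangentConeAtInfinity X {p | p 1 = 0} := by
  have hpos : ∀ j : ℕ, 0 < (j : ℝ) + 1 := fun j => by positivity
  have htop : Tendsto (fun j : ℕ => (j : ℝ) + 1) atTop atTop :=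
    tendsto_atTop_add_const_right _ 1 tendsto_natCast_atTop_atTop
  have hsphere : ({!₂[1, 0], -!₂[1, 0]} : Set (EuclideanSpace ℝ (Fin 2))) ⊆ sphere 0 1 := by
    rintro _ (rfl | rfl) <;> simp [EuclideanSpace.norm_eq]
  exact ⟨_, _, hpos, htop, hsphere,
    tendsto_hausdorffEDist_inv_smul_sphere hband hsides hpos htop, cone_pm_unit_eq_axis.symm⟩

theorem eq_of_isTangentConeAtInfinity_of_band (hband : ∀ p ∈ X, |p 1| ≤ c)
    (hsides : ∀ᶠ t in atTop, (∃ p ∈ X ∩ sphere 0 t, 0 ≤ p 0) ∧ ∃ p ∈ X ∩ sphere 0 t, p 0 ≤ 0)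
    {E : Set (EuclideanSpace ℝ (Fin 2))} (hE : IsTangentConeAtInfinity X E) :
    E = {p | p 1 = 0} := by
  obtain ⟨t, D, hpos, htop, -, hD, rfl⟩ := hE
  have hcl := closure_eq_closure_of_tendsto_hausdorffEDist hD
    (tendsto_hausdorffEDist_inv_smul_sphere hband hsides hpos htop)
  have hfin : ({!₂[1, 0], -!₂[1, 0]} : Set (EuclideanSpace ℝ (Fin 2))).Finite := toFinite _
  rw [hfin.isClosed.closure_eq] at hcl
  have hDfin := hfin.subset (hcl ▸ subset_closure)
  rw [← cone_pm_unit_eq_axis, ← hcl, hDfin.isClosed.closure_eq]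

end HorizontalBand

theorem abs_apply_one_le_of_mem_range_sinGraph {p : EuclideanSpace ℝ (Fin 2)}
    (hp : p ∈ range sinGraph) : |p 1| ≤ 1 := by
  obtain ⟨x, rfl⟩ := hp
  simpa [sinGraph] using Real.abs_sin_le_one x

theorem exists_nonneg_norm_sinGraph_eq {t : ℝ} (ht : 0 ≤ t) : ∃ x, 0 ≤ x ∧ ‖sinGraph x‖ = t := by
  have hcont : ContinuousOn (fun x => ‖sinGraph x‖) (Icc 0 t) :=
    (continuous_norm.comp lipschitzWith_sinGraph.continuous).continuousOn
  have hend : t ≤ ‖sinGraph t‖ := by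
    simpa [sinGraph, abs_of_nonneg ht] using PiLp.norm_apply_le (sinGraph t) 0
  have hstart : ‖sinGraph 0‖ ≤ t := by simp [sinGraph, EuclideanSpace.norm_eq, ht]
  obtain ⟨x, hx, hxt⟩ := intermediate_value_Icc ht hcont ⟨hstart, hend⟩
  exact ⟨x, hx.1, hxt⟩

theorem sinGraph_meets_sphere_on_both_sides {t : ℝ} (ht : 0 ≤ t) :
    (∃ p ∈ range sinGraph ∩ sphere 0 t, 0 ≤ p 0) ∧
      ∃ p ∈ range sinGraph ∩ sphere 0 t, p 0 ≤ 0 := by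
  obtain ⟨x, hx, hxt⟩ := exists_nonneg_norm_sinGraph_eq ht
  have hneg : sinGraph (-x) = -sinGraph x := by
    ext i; fin_cases i <;> simp [sinGraph]
  refine ⟨⟨sinGraph x, ⟨⟨x, rfl⟩, by simpa using hxt⟩, by simpa [sinGraph] using hx⟩,
    ⟨sinGraph (-x), ⟨⟨-x, rfl⟩, by simpa [hneg] using hxt⟩, by simpa [sinGraph] using hx⟩⟩

/-- The graph of sine in `ℝ²` is Lipschitz normally embedded, its unique tangent cone
at infinity is the line `{(x,0)}`, yet it is not contained in any affine line and is
not an algebraic set: the real-analytic version of the rigidity theorem fails. -/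
theorem sine_graph_counterexample :
    (∃ lam : ℝ, ∀ p ∈ {p : EuclideanSpace ℝ (Fin 2) | p 1 = Real.sin (p 0)},
      ∀ q ∈ {p : EuclideanSpace ℝ (Fin 2) | p 1 = Real.sin (p 0)},
        innerEDist {p : EuclideanSpace ℝ (Fin 2) | p 1 = Real.sin (p 0)} p q ≤
          ENNReal.ofReal (lam * ‖p - q‖)) ∧
    (IsTangentConeAtInfinity {p : EuclideanSpace ℝ (Fin 2) | p 1 = Real.sin (p 0)}
        {p : EuclideanSpace ℝ (Fin 2) | p 1 = 0} ∧
      ∀ E, IsTangentConeAtInfinity {p : EuclideanSpace ℝ (Fin 2) | p 1 = Real.sin (p 0)} E →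
        E = {p : EuclideanSpace ℝ (Fin 2) | p 1 = 0}) ∧
    (¬ ∃ a v : EuclideanSpace ℝ (Fin 2),
      {p : EuclideanSpace ℝ (Fin 2) | p 1 = Real.sin (p 0)} ⊆
        {q | ∃ t : ℝ, q = a + t • v}) ∧
    ¬ IsRealAlgebraicSet {p : EuclideanSpace ℝ (Fin 2) | p 1 = Real.sin (p 0)} := by
  rw [← range_sinGraph]
  have hband : ∀ p ∈ range sinGraph, |p 1| ≤ 1 := fun _ => abs_apply_one_le_of_mem_range_sinGraph
  have hsides := eventually_ge_atTop 0 |>.mono fun _ => sinGraph_meets_sphere_on_both_sides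
  refine ⟨⟨2, fun p hp q hq => ?_⟩, ⟨isTangentConeAtInfinity_of_band hband hsides,
    fun E => eq_of_isTangentConeAtInfinity_of_band hband hsides⟩,
    fun ⟨a, v, h⟩ => range_sinGraph_not_subset_line a v h, not_isRealAlgebraicSet_range_sinGraph⟩
  rw [ENNReal.ofReal_mul zero_le_two, ← dist_eq_norm, ← edist_dist]
  simpa using innerEDist_range_sinGraph_le hp hq
end
end
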